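/- arXiv:1704.06921 — 5 statements merged into one kernel-verified Lean document; each statement's English description precedes it below -/
import Mathlib

section
/- Let G=(V,E) be a countable simple graph with weight function c : E → (0,∞). If (X_n) is a convergent sequence of subsets of V (i.e. liminf X_n = limsup X_n, with common value lim X_n), then d_c(lim X_n) ≤ liminf_n d_c(X_n). -/
open Set Filter Topology ENNReal

noncomputable section

/-- The set of edges of `G` with exactly one endpoint in `X` (`out_G(X)`). -/
def outEdges {V : Type*} (G : SimpleGraph V) (X : Set V) : Set (Sym2 V) :=
  {e | e ∈ G.edgeSet ∧ ∃ x y, e = s(x, y) ∧ x ∈ X ∧ y ∉ X}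

/-- `d_c(X)`: the total weight of the edges leaving `X`, a value in `[0,∞]`. -/
def dCut {V : Type*} (G : SimpleGraph V) (c : Sym2 V → ℝ≥0∞) (X : Set V) : ℝ≥0∞ :=
  ∑' e : outEdges G X, c e

/-!
An edge leaving `lim Xₙ` has one endpoint eventually inside `Xₙ` and the other eventually
outside, so it eventually leaves `Xₙ`. Hence the indicator of `out(lim Xₙ)` is bounded by the
pointwise `liminf` of the indicators of `out(Xₙ)`, and Fatou's lemma for sums in `ℝ≥0∞`
(Fatou for the counting measure) gives the bound on the cut weights.
-/

theorem ENNReal.tsum_liminf_le_liminf_tsum {ι : Type*} (f : ℕ → ι → ℝ≥0∞) :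
    ∑' i, liminf (fun n => f n i) atTop ≤ liminf (fun n => ∑' i, f n i) atTop := by
  let _ : MeasurableSpace ι := ⊤
  simpa only [MeasureTheory.lintegral_count] using
    MeasureTheory.lintegral_liminf_le (μ := MeasureTheory.Measure.count)
      fun n => measurable_from_top (f := f n)

section

variable {V ι : Type*} (G : SimpleGraph V)

theorem dCut_eq_tsum_indicator (c : Sym2 V → ℝ≥0∞) (X : Set V) :
    dCut G c X = ∑' e, (outEdges G X).indicator c e :=
  tsum_subtype _ _

theorem eventually_mem_outEdges {f : Filter ι} {X : ι → Set V} {L : Set V}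
    (hL : L ⊆ liminf X f) (hL' : limsup X f ⊆ L) {e : Sym2 V} (he : e ∈ outEdges G L) :
    ∀ᶠ i in f, e ∈ outEdges G (X i) := by
  obtain ⟨heG, x, y, rfl, hx, hy⟩ := he
  have hx_ev : ∀ᶠ i in f, x ∈ X i := mem_liminf_iff_eventually_mem.1 (hL hx)
  have hy_ev : ∀ᶠ i in f, y ∉ X i :=
    not_frequently.1 fun h => hy (hL' (mem_limsup_iff_frequently_mem.2 h))
  filter_upwards [hx_ev, hy_ev] with i hxi hyi
  exact ⟨heG, x, y, rfl, hxi, hyi⟩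

theorem dCut_le_liminf (c : Sym2 V → ℝ≥0∞) {X : ℕ → Set V} {L : Set V}
    (hL : L ⊆ liminf X atTop) (hL' : limsup X atTop ⊆ L) :
    dCut G c L ≤ liminf (fun n => dCut G c (X n)) atTop := by
  simp only [dCut_eq_tsum_indicator]
  refine le_trans (ENNReal.tsum_le_tsum fun e => ?_) (ENNReal.tsum_liminf_le_liminf_tsum _)
  by_cases he : e ∈ outEdges G L
  · rw [indicator_of_mem he]
    refine le_liminf_of_le (by isBoundedDefault) ?_
    filter_upwards [eventually_mem_outEdges G hL hL' he] with n hn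
    rw [indicator_of_mem hn]
  · rw [indicator_of_notMem he]
    exact zero_le

end

theorem dCut_limit_le_liminf_general {V : Type*} (G : SimpleGraph V)
    (c : Sym2 V → ℝ≥0∞)
    (X : ℕ → Set V) (L : Set V)
    (hliminf : L = ⋃ m, ⋂ n, ⋂ (_ : m ≤ n), X n)
    (hlimsup : L = ⋂ m, ⋃ n, ⋃ (_ : m ≤ n), X n) :
    dCut G c L ≤ Filter.liminf (fun n => dCut G c (X n)) Filter.atTop := by
  refine dCut_le_liminf G c ?_ ?_
  · rw [liminf_eq_iSup_iInf_of_nat, hliminf]; exact subset_rfl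
  · rw [limsup_eq_iInf_iSup_of_nat, hlimsup]; exact subset_rfl

/-- If `(X_n)` is a convergent sequence of subsets of `V` (i.e. `liminf Xₙ = limsup Xₙ`,
with common value `L = lim Xₙ`), then `d_c(lim Xₙ) ≤ liminf d_c(Xₙ)`. -/
theorem dCut_limit_le_liminf {V : Type*} [Countable V] (G : SimpleGraph V)
    (c : Sym2 V → ℝ≥0∞) (hc : ∀ e ∈ G.edgeSet, 0 < c e ∧ c e < ⊤)
    (X : ℕ → Set V) (L : Set V)
    (hliminf : L = ⋃ m, ⋂ n, ⋂ (_ : m ≤ n), X n)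
    (hlimsup : L = ⋂ m, ⋃ n, ⋃ (_ : m ≤ n), X n) :
    dCut G c L ≤ Filter.liminf (fun n => dCut G c (X n)) Filter.atTop :=
  dCut_limit_le_liminf_general G c X L hliminf hlimsup
end
end

section
/- Let V be a nonempty countable set and b : P(V) → [0,∞] satisfy: (0) b(X) = 0 iff X ∈ {∅, V}; (1) b(X) = b(V \ X); (2) b(X) + b(Y) ≥ b(X ∩ Y) + b(X ∪ Y); (3') for every ⊆-monotone sequence (X_n) of subsets, b(lim X_n) ≤ liminf_n b(X_n); (4) λ_b(u,v) < ∞ for all u ≠ v. Then there exists a laminar system L* of optimal cuts such that every pair of distinct vertices u, v ∈ V is separated optimally by some member of L*. -/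
open Set Filter Topology ENNReal

noncomputable section

/-- `λ_b(u,v)`: the infimum of `b(X)` over all `u-v` cuts `X`
(sets with `u ∈ X` and `v ∉ X`). -/
def lamB {V : Type*} (b : Set V → ℝ≥0∞) (u v : V) : ℝ≥0∞ :=
  ⨅ (X : Set V) (_ : u ∈ X ∧ v ∉ X), b X

/-- `X` is an optimal `u-v` cut: a `u-v` cut with `b(X) = λ_b(u,v)`. -/
def IsOptCut {V : Type*} (b : Set V → ℝ≥0∞) (u v : V) (X : Set V) : Prop :=
  u ∈ X ∧ v ∉ X ∧ b X = lamB b u v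

/-- `X` separates `u` and `v` optimally: `X` or its complement is an optimal `u-v` cut. -/
def SepOptimally {V : Type*} (b : Set V → ℝ≥0∞) (u v : V) (X : Set V) : Prop :=
  IsOptCut b u v X ∨ IsOptCut b u v Xᶜ

/-- A family of sets is laminar if any two members are disjoint or `⊆`-comparable. -/
def Laminar {V : Type*} (F : Set (Set V)) : Prop :=
  ∀ A ∈ F, ∀ B ∈ F, A ∩ B = ∅ ∨ A ⊆ B ∨ B ⊆ A


/-!
A minimizing sequence of `u`-`v` cuts `Xₘ` with summable excesses `b Xₘ - λ_b(u,v)` has, by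
submodularity, intersections whose excess is at most the sum of the excesses; by the two
continuity conditions its lower limit `⋃ₙ ⋂ₘ X (m + n)` is then an optimal cut.

If `Y` separates `u, v` optimally and `X` is an optimal `s`-`t` cut, submodularity and
posimodularity `b (Y \ X) + b (X \ Y) ≤ b Y + b X` show that one of `Y ∩ X`, `Y ∪ X`, `Y \ X`,
`X \ Y`, `X` separates `u, v` optimally. If `X` and `Y` cross, each of these five sets is laminar
with `X` and with every set laminar with both `X` and `Y`, so an optimal separator crossing the
fewest members of a finite laminar family crosses none of them. Running through the countably many
pairs and adding such separators one at a time gives an increasing chain of finite laminar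
families; `L*` is its union.
-/

section Cuts

variable {V : Type*} (b : Set V → ℝ≥0∞) {u v : V}

lemma lamB_le {X : Set V} (hu : u ∈ X) (hv : v ∉ X) : lamB b u v ≤ b X :=
  iInf₂_le X ⟨hu, hv⟩

lemma isOptCut_of_le {X : Set V} (hu : u ∈ X) (hv : v ∉ X) (h : b X ≤ lamB b u v) :
    IsOptCut b u v X :=
  ⟨hu, hv, le_antisymm h (lamB_le b hu hv)⟩

section Submodular

variable (h2 : ∀ X Y : Set V, b (X ∩ Y) + b (X ∪ Y) ≤ b X + b Y)
include h2

lemma inter_add_lamB_le {X Y : Set V} (hX : u ∈ X ∧ v ∉ X) (hY : u ∈ Y ∧ v ∉ Y) :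
    b (X ∩ Y) + lamB b u v ≤ b X + b Y := by
  have : lamB b u v ≤ b (X ∪ Y) := lamB_le b (.inl hX.1) fun h => h.elim hX.2 hY.2
  exact (add_le_add_right this _).trans (h2 X Y)

lemma biInter_le_lamB_add (hfin : lamB b u v ≠ ⊤) {X : ℕ → Set V} (hX : ∀ m, u ∈ X m ∧ v ∉ X m)
    (N : ℕ) :
    b (⋂ m ≤ N, X m) ≤ lamB b u v + ∑ m ∈ Finset.range (N + 1), (b (X m) - lamB b u v) := by
  induction N with
  | zero => simpa using le_add_tsub
  | succ N ih =>
    have hcut : u ∈ ⋂ m ≤ N, X m ∧ v ∉ ⋂ m ≤ N, X m :=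
      ⟨mem_iInter₂.2 fun m _ => (hX m).1, fun h => (hX 0).2 (mem_iInter₂.1 h 0 (Nat.zero_le N))⟩
    rw [biInter_le_succ, Finset.sum_range_succ, ← ENNReal.add_le_add_iff_right hfin]
    calc b ((⋂ m ≤ N, X m) ∩ X (N + 1)) + lamB b u v
        ≤ b (⋂ m ≤ N, X m) + b (X (N + 1)) := inter_add_lamB_le b h2 hcut (hX _)
      _ ≤ (lamB b u v + ∑ m ∈ Finset.range (N + 1), (b (X m) - lamB b u v)) +
          (lamB b u v + (b (X (N + 1)) - lamB b u v)) := add_le_add ih le_add_tsub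
      _ = _ := by ring

variable
  (h3m : ∀ X : ℕ → Set V, Monotone X →
    b (⋃ n, X n) ≤ Filter.liminf (fun n => b (X n)) Filter.atTop)
  (h3a : ∀ X : ℕ → Set V, Antitone X →
    b (⋂ n, X n) ≤ Filter.liminf (fun n => b (X n)) Filter.atTop)
include h3a

lemma iInter_le_lamB_add (hfin : lamB b u v ≠ ⊤) {X : ℕ → Set V} (hX : ∀ m, u ∈ X m ∧ v ∉ X m) :
    b (⋂ m, X m) ≤ lamB b u v + ∑' m, (b (X m) - lamB b u v) := by
  rw [← biInter_le_eq_iInter]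
  have hanti : Antitone fun N => ⋂ m ≤ N, X m := fun N M hNM =>
    biInter_mono (fun m (hm : m ≤ N) => hm.trans hNM) fun _ _ => le_rfl
  refine (h3a _ hanti).trans (liminf_le_of_frequently_le' (Frequently.of_forall fun N => ?_))
  exact (biInter_le_lamB_add b h2 hfin hX N).trans (add_le_add_right (ENNReal.sum_le_tsum _) _)

include h3m

lemma isOptCut_iUnion_iInter (hfin : lamB b u v ≠ ⊤) {X : ℕ → Set V}
    (hX : ∀ m, u ∈ X m ∧ v ∉ X m) (hsum : ∑' m, (b (X m) - lamB b u v) ≠ ⊤) :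
    IsOptCut b u v (⋃ n, ⋂ m, X (m + n)) := by
  have hmono : Monotone fun n => ⋂ m, X (m + n) := fun n k hnk x hx =>
    mem_iInter.2 fun m => by
      simpa [Nat.sub_add_cancel hnk, add_assoc] using mem_iInter.1 hx (m + (k - n))
  have hv : v ∉ ⋃ n, ⋂ m, X (m + n) := fun h =>
    let ⟨n, hn⟩ := mem_iUnion.1 h
    (hX (0 + n)).2 (mem_iInter.1 hn 0)
  have htail := ENNReal.tendsto_sum_nat_add _ hsum
  refine isOptCut_of_le b (mem_iUnion.2 ⟨0, mem_iInter.2 fun m => (hX _).1⟩) hv ?_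
  calc b (⋃ n, ⋂ m, X (m + n))
        ≤ liminf (fun n => b (⋂ m, X (m + n))) atTop := h3m _ hmono
      _ ≤ liminf (fun n => lamB b u v + ∑' m, (b (X (m + n)) - lamB b u v)) atTop :=
        liminf_le_liminf (Eventually.of_forall fun n =>
          iInter_le_lamB_add b h2 h3a hfin fun m => hX (m + n))
      _ = lamB b u v := by simpa using (htail.const_add (lamB b u v)).liminf_eq

lemma exists_isOptCut (hfin : lamB b u v ≠ ⊤) : ∃ X, IsOptCut b u v X := by
  have hnear : ∀ m : ℕ, ∃ X : Set V, (u ∈ X ∧ v ∉ X) ∧ b X < lamB b u v + 2⁻¹ ^ m := by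
    intro m
    have := ENNReal.lt_add_right hfin (by simp : (2⁻¹ : ℝ≥0∞) ^ m ≠ 0)
    simpa only [lamB, iInf_lt_iff, exists_prop] using this
  choose X hX hbX using hnear
  have hsum : ∑' m, (b (X m) - lamB b u v) ≤ ∑' m : ℕ, (2⁻¹ : ℝ≥0∞) ^ m :=
    ENNReal.tsum_le_tsum fun m => tsub_le_iff_left.2 (hbX m).le
  rw [ENNReal.tsum_geometric, ENNReal.one_sub_inv_two, inv_inv] at hsum
  exact ⟨_, isOptCut_iUnion_iInter b h2 h3m h3a hfin hX (ne_top_of_le_ne_top (by simp) hsum)⟩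

end Submodular

section Symmetric

variable (h1 : ∀ X : Set V, b Xᶜ = b X)
include h1

lemma lamB_comm (u v : V) : lamB b u v = lamB b v u := by
  have key : ∀ a c : V, lamB b a c ≤ lamB b c a := fun a c =>
    le_iInf₂ fun X hX => (lamB_le b (mem_compl hX.2) (notMem_compl_iff.2 hX.1)).trans (h1 X).le
  exact le_antisymm (key u v) (key v u)

lemma IsOptCut.compl {X : Set V} (h : IsOptCut b u v X) : IsOptCut b v u Xᶜ :=
  ⟨h.2.1, notMem_compl_iff.2 h.1, by rw [h1, h.2.2, lamB_comm b h1]⟩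

lemma sepOptimally_iff {X : Set V} :
    SepOptimally b u v X ↔ IsOptCut b u v X ∨ IsOptCut b v u X := by
  refine or_congr Iff.rfl ⟨fun h => ?_, IsOptCut.compl b h1⟩
  simpa using IsOptCut.compl b h1 h

lemma SepOptimally.symm {X : Set V} (h : SepOptimally b u v X) : SepOptimally b v u X :=
  (sepOptimally_iff b h1).2 ((sepOptimally_iff b h1).1 h).symm

lemma lamB_le_of_separates {X : Set V} (hX : u ∈ X ↔ v ∉ X) : lamB b u v ≤ b X := by
  by_cases hu : u ∈ X
  · exact lamB_le b hu (hX.1 hu)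
  · exact (lamB_comm b h1 u v).trans_le (lamB_le b (not_not.1 (hX.not.1 hu)) hu)

lemma sepOptimally_of_le {X : Set V} (hX : u ∈ X ↔ v ∉ X) (h : b X ≤ lamB b u v) :
    SepOptimally b u v X := by
  rw [sepOptimally_iff b h1]
  by_cases hu : u ∈ X
  · exact .inl (isOptCut_of_le b hu (hX.1 hu) h)
  · exact .inr (isOptCut_of_le b (not_not.1 (hX.not.1 hu)) hu (h.trans (lamB_comm b h1 u v).le))

lemma sepOptimally_of_add_le {s t : V} (hst : lamB b s t ≠ ⊤) {X Y : Set V}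
    (hX : u ∈ X ↔ v ∉ X) (hY : s ∈ Y ↔ t ∉ Y) (h : b X + b Y ≤ lamB b u v + lamB b s t) :
    SepOptimally b u v X := by
  refine sepOptimally_of_le b h1 hX ((ENNReal.add_le_add_iff_right hst).1 ?_)
  exact (add_le_add_right (lamB_le_of_separates b h1 hY) _).trans h

variable (h2 : ∀ X Y : Set V, b (X ∩ Y) + b (X ∪ Y) ≤ b X + b Y)
include h2

lemma sdiff_add_sdiff_le (X Y : Set V) : b (X \ Y) + b (Y \ X) ≤ b X + b Y := by
  have h : b (X ∪ Yᶜ) = b (Y \ X) := by rw [← h1, compl_union, compl_compl, sdiff_eq, inter_comm]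
  simpa only [h, h1, ← sdiff_eq] using h2 X Yᶜ

lemma exists_sepOptimally_uncross {s t : V} {X Y : Set V} (hY : IsOptCut b u v Y)
    (hX : IsOptCut b s t X) (hst : lamB b s t ≠ ⊤) :
    ∃ Z ∈ ({Y ∩ X, Y ∪ X, Y \ X, X \ Y, X} : Set (Set V)), SepOptimally b u v Z := by
  obtain ⟨huY, hvY, hbY⟩ := hY
  obtain ⟨hsX, htX, hbX⟩ := hX
  have key : ∀ P Q : Set V, (u ∈ P ↔ v ∉ P) → (s ∈ Q ↔ t ∉ Q) → b P + b Q ≤ b Y + b X →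
      SepOptimally b u v P := fun _ _ hP hQ h =>
    sepOptimally_of_add_le b h1 hst hP hQ (by rwa [← hbY, ← hbX])
  have hsub := h2 Y X
  have hsdiff := sdiff_add_sdiff_le b h1 h2 Y X
  -- The candidate is determined by which of `u, v` lie in `X` and which of `s, t` lie in `Y`.
  have : (u ∈ X ∧ t ∉ Y) ∨ (v ∉ X ∧ s ∈ Y) ∨ (u ∉ X ∧ s ∉ Y) ∨ (v ∈ X ∧ t ∈ Y) ∨
      ((u ∈ X ↔ v ∉ X) ∧ (s ∈ Y ↔ t ∉ Y)) := by tauto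
  rcases this with ⟨hu, ht⟩ | ⟨hv, hs⟩ | ⟨hu, hs⟩ | ⟨hv, ht⟩ | ⟨huv, hst⟩
  · exact ⟨Y ∩ X, by simp, key _ (Y ∪ X) (by simp [*]) (by simp [*]) hsub⟩
  · exact ⟨Y ∪ X, by simp, key _ (Y ∩ X) (by simp [*]) (by simp [*]) (by rwa [add_comm])⟩
  · exact ⟨Y \ X, by simp, key _ (X \ Y) (by simp [*]) (by simp [*]) hsdiff⟩
  · exact ⟨X \ Y, by simp, key _ (Y \ X) (by simp [*]) (by simp [*]) (by rwa [add_comm])⟩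
  · exact ⟨X, by simp, key X Y huv hst (add_comm _ _).le⟩

end Symmetric

end Cuts

section LaminarPair

variable {V : Type*}

def LaminarPair (A B : Set V) : Prop :=
  Disjoint A B ∨ A ⊆ B ∨ B ⊆ A

lemma LaminarPair.symm {A B : Set V} (h : LaminarPair A B) : LaminarPair B A := by
  rcases h with h | h | h
  exacts [.inl h.symm, .inr (.inr h), .inr (.inl h)]

lemma laminar_iff {F : Set (Set V)} : Laminar F ↔ ∀ A ∈ F, ∀ B ∈ F, LaminarPair A B := by
  simp only [Laminar, LaminarPair, disjoint_iff_inter_eq_empty]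

lemma Laminar.insert {F : Set (Set V)} (hF : Laminar F) {Z : Set V}
    (hZ : ∀ X ∈ F, LaminarPair Z X) : Laminar (insert Z F) := by
  rw [laminar_iff] at hF ⊢
  rintro A (rfl | hA) B (rfl | hB)
  exacts [.inr (.inl le_rfl), hZ B hB, (hZ A hA).symm, hF A hA B hB]

lemma Laminar.iUnion {ι : Type*} {F : ι → Set (Set V)} (hdir : Directed (· ⊆ ·) F)
    (hF : ∀ i, Laminar (F i)) : Laminar (⋃ i, F i) := by
  intro A hA B hB
  obtain ⟨i, hA⟩ := mem_iUnion.1 hA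
  obtain ⟨j, hB⟩ := mem_iUnion.1 hB
  obtain ⟨k, hik, hjk⟩ := hdir i j
  exact hF k A (hik hA) B (hjk hB)

variable {W X Y : Set V}

lemma LaminarPair.inter (hX : LaminarPair W X) (hY : LaminarPair W Y) :
    LaminarPair W (Y ∩ X) := by
  rcases hY with hY | hY | hY
  · exact .inl (hY.mono_right inter_subset_left)
  · rcases hX with hX | hX | hX
    · exact .inl (hX.mono_right inter_subset_right)
    · exact .inr (.inl (subset_inter hY hX))
    · exact .inr (.inr (inter_subset_right.trans hX))
  · exact .inr (.inr (inter_subset_left.trans hY))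

lemma LaminarPair.union (hX : LaminarPair W X) (hY : LaminarPair W Y) (hXY : ¬Disjoint Y X) :
    LaminarPair W (Y ∪ X) := by
  rcases hX with hX | hX | hX
  · rcases hY with hY | hY | hY
    · exact .inl (disjoint_union_right.2 ⟨hY, hX⟩)
    · exact .inr (.inl (hY.trans subset_union_left))
    · exact absurd (hX.mono_left hY) hXY
  · exact .inr (.inl (hX.trans subset_union_right))
  · rcases hY with hY | hY | hY
    · exact absurd (hY.mono_left hX).symm hXY
    · exact .inr (.inl (hY.trans subset_union_left))
    · exact .inr (.inr (union_subset hY hX))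

lemma LaminarPair.sdiff (hX : LaminarPair W X) (hY : LaminarPair W Y) (hXY : ¬X ⊆ Y) :
    LaminarPair W (Y \ X) := by
  rcases hY with hY | hY | hY
  · exact .inl (hY.mono_right sdiff_subset)
  · rcases hX with hX | hX | hX
    · exact .inr (.inl (subset_sdiff.2 ⟨hY, hX⟩))
    · exact .inl (disjoint_sdiff_right.mono_left hX)
    · exact absurd (hX.trans hY) hXY
  · exact .inr (.inr (sdiff_subset.trans hY))

lemma LaminarPair.of_mem_uncross (hX : LaminarPair W X) (hY : LaminarPair W Y)
    (hXY : ¬LaminarPair Y X) {Z : Set V}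
    (hZ : Z ∈ ({Y ∩ X, Y ∪ X, Y \ X, X \ Y, X} : Set (Set V))) :
    LaminarPair W Z := by
  simp only [LaminarPair, not_or] at hXY
  rcases hZ with rfl | rfl | rfl | rfl | rfl
  exacts [hX.inter hY, hX.union hY hXY.1, hX.sdiff hY hXY.2.2, hY.sdiff hX hXY.2.1, hX]

lemma laminarPair_of_mem_uncross {Z : Set V}
    (hZ : Z ∈ ({Y ∩ X, Y ∪ X, Y \ X, X \ Y, X} : Set (Set V))) : LaminarPair Z X := by
  rcases hZ with rfl | rfl | rfl | rfl | rfl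
  exacts [.inr (.inl inter_subset_right), .inr (.inr subset_union_right), .inl disjoint_sdiff_left,
    .inr (.inl sdiff_subset), .inr (.inl le_rfl)]

end LaminarPair

section LaminarOptCuts

variable {V : Type*} (b : Set V → ℝ≥0∞)

def IsLaminarOptCuts (L : Set (Set V)) : Prop :=
  Laminar L ∧ ∀ Z ∈ L, ∃ x y : V, x ≠ y ∧ IsOptCut b x y Z

lemma isLaminarOptCuts_empty : IsLaminarOptCuts b ∅ :=
  ⟨by simp [Laminar], by simp⟩

lemma IsLaminarOptCuts.iUnion {ι : Type*} {F : ι → Set (Set V)} (hdir : Directed (· ⊆ ·) F)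
    (hF : ∀ i, IsLaminarOptCuts b (F i)) : IsLaminarOptCuts b (⋃ i, F i) := by
  refine ⟨Laminar.iUnion hdir fun i => (hF i).1, fun Z hZ => ?_⟩
  obtain ⟨i, hi⟩ := mem_iUnion.1 hZ
  exact (hF i).2 Z hi

variable (h1 : ∀ X : Set V, b Xᶜ = b X) (h2 : ∀ X Y : Set V, b (X ∩ Y) + b (X ∪ Y) ≤ b X + b Y)
include h1 h2

lemma exists_sepOptimally_forall_laminarPair {F : Set (Set V)} (hF : F.Finite) (hL : Laminar F)
    (hFopt : ∀ X ∈ F, ∃ s t, IsOptCut b s t X ∧ lamB b s t ≠ ⊤)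
    {u v : V} {Y₀ : Set V} (hY₀ : SepOptimally b u v Y₀) :
    ∃ Z, SepOptimally b u v Z ∧ ∀ X ∈ F, LaminarPair Z X := by
  let crossing (Z : Set V) : Set (Set V) := {X ∈ F | ¬LaminarPair Z X}
  obtain ⟨Y, hY, hmin⟩ := (measure fun Z => (crossing Z).ncard).wf.has_min
    {Z | SepOptimally b u v Z} ⟨Y₀, hY₀⟩
  refine ⟨Y, hY, fun X hX => by_contra fun hYX => ?_⟩
  obtain ⟨s, t, hXopt, hst⟩ := hFopt X hX
  obtain ⟨Z, hZ, hZsep⟩ :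
      ∃ Z ∈ ({Y ∩ X, Y ∪ X, Y \ X, X \ Y, X} : Set (Set V)), SepOptimally b u v Z := by
    rcases (sepOptimally_iff b h1).1 hY with hY | hY
    · exact exists_sepOptimally_uncross b h1 h2 hY hXopt hst
    · obtain ⟨Z, hZ, hZsep⟩ := exists_sepOptimally_uncross b h1 h2 hY hXopt hst
      exact ⟨Z, hZ, hZsep.symm b h1⟩
  refine hmin Z hZsep (ncard_lt_ncard ?_ (hF.subset (sep_subset _ _)))
  have hsub : crossing Z ⊆ crossing Y := fun W hW => ⟨hW.1, fun hYW =>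
    hW.2 ((laminar_iff.1 hL W hW.1 X hX).of_mem_uncross hYW.symm hYX hZ).symm⟩
  exact (ssubset_iff_of_subset hsub).2
    ⟨X, ⟨hX, hYX⟩, fun h => h.2 (laminarPair_of_mem_uncross hZ)⟩

lemma exists_sepOptimally_isLaminarOptCuts_insert
    (h3m : ∀ X : ℕ → Set V, Monotone X →
      b (⋃ n, X n) ≤ Filter.liminf (fun n => b (X n)) Filter.atTop)
    (h3a : ∀ X : ℕ → Set V, Antitone X →
      b (⋂ n, X n) ≤ Filter.liminf (fun n => b (X n)) Filter.atTop)
    (h4 : ∀ u v : V, u ≠ v → lamB b u v < ⊤)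
    {F : Set (Set V)} (hF : F.Finite) (hL : IsLaminarOptCuts b F) {u v : V} (huv : u ≠ v) :
    ∃ Z, SepOptimally b u v Z ∧ IsLaminarOptCuts b (insert Z F) := by
  obtain ⟨Y, hY⟩ := exists_isOptCut b h2 h3m h3a (h4 u v huv).ne
  have hFopt : ∀ X ∈ F, ∃ s t, IsOptCut b s t X ∧ lamB b s t ≠ ⊤ := fun X hX =>
    let ⟨s, t, hst, hX⟩ := hL.2 X hX
    ⟨s, t, hX, (h4 s t hst).ne⟩
  obtain ⟨Z, hZ, hZF⟩ := exists_sepOptimally_forall_laminarPair b h1 h2 hF hL.1 hFopt (.inl hY)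
  refine ⟨Z, hZ, hL.1.insert hZF, ?_⟩
  rintro W (rfl | hW)
  · rcases (sepOptimally_iff b h1).1 hZ with h | h
    exacts [⟨u, v, huv, h⟩, ⟨v, u, huv.symm, h⟩]
  · exact hL.2 W hW

end LaminarOptCuts

theorem exists_laminar_system_general {V : Type*} [Countable V]
    (b : Set V → ℝ≥0∞)
    (h1 : ∀ X : Set V, b Xᶜ = b X)
    (h2 : ∀ X Y : Set V, b (X ∩ Y) + b (X ∪ Y) ≤ b X + b Y)
    (h3m : ∀ X : ℕ → Set V, Monotone X →
      b (⋃ n, X n) ≤ Filter.liminf (fun n => b (X n)) Filter.atTop)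
    (h3a : ∀ X : ℕ → Set V, Antitone X →
      b (⋂ n, X n) ≤ Filter.liminf (fun n => b (X n)) Filter.atTop)
    (h4 : ∀ u v : V, u ≠ v → lamB b u v < ⊤)
    :
    ∃ L : Set (Set V), Laminar L ∧
      (∀ Z ∈ L, ∃ x y : V, x ≠ y ∧ IsOptCut b x y Z) ∧
      (∀ u v : V, u ≠ v → ∃ Z ∈ L, SepOptimally b u v Z) := by
  rcases isEmpty_or_nonempty {q : V × V // q.1 ≠ q.2} with hV | hV
  · obtain ⟨hlam, hopt⟩ := isLaminarOptCuts_empty b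
    exact ⟨∅, hlam, hopt, fun u v huv => (hV.false ⟨(u, v), huv⟩).elim⟩
  obtain ⟨e, he⟩ := exists_surjective_nat {q : V × V // q.1 ≠ q.2}
  have hstep : ∀ F : Set (Set V), F.Finite → IsLaminarOptCuts b F → ∀ n, ∃ Z,
      SepOptimally b (e n).1.1 (e n).1.2 Z ∧ IsLaminarOptCuts b (insert Z F) :=
    fun F hF hL n => exists_sepOptimally_isLaminarOptCuts_insert b h1 h2 h3m h3a h4 hF hL (e n).2
  choose! Z hZsep hZL using hstep
  let F : ℕ → Set (Set V) := fun n => Nat.rec ∅ (fun n F => insert (Z F n) F) n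
  have hF : ∀ n, (F n).Finite ∧ IsLaminarOptCuts b (F n) := fun n => by
    induction n with
    | zero => exact ⟨finite_empty, isLaminarOptCuts_empty b⟩
    | succ n ih => exact ⟨ih.1.insert _, hZL _ ih.1 ih.2 n⟩
  have hmono : Monotone F := monotone_nat_of_le_succ fun n => subset_insert _ _
  obtain ⟨hlam, hopt⟩ := IsLaminarOptCuts.iUnion b hmono.directed_le fun n => (hF n).2
  refine ⟨⋃ n, F n, hlam, hopt, fun u v huv => ?_⟩
  obtain ⟨n, hn⟩ := he ⟨(u, v), huv⟩
  have hsep := hZsep _ (hF n).1 (hF n).2 n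
  rw [hn] at hsep
  exact ⟨Z (F n) n, mem_iUnion.2 ⟨n + 1, mem_insert _ _⟩, hsep⟩

/-- Under conditions (0), (1), (2), (3') and (4) there is a laminar system of optimal cuts
separating every pair of distinct vertices optimally. -/
theorem exists_laminar_system {V : Type*} [Countable V] [Nonempty V]
    (b : Set V → ℝ≥0∞)
    (h0 : ∀ X : Set V, b X = 0 ↔ X = ∅ ∨ X = Set.univ)
    (h1 : ∀ X : Set V, b Xᶜ = b X)
    (h2 : ∀ X Y : Set V, b (X ∩ Y) + b (X ∪ Y) ≤ b X + b Y)
    (h3m : ∀ X : ℕ → Set V, Monotone X →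
      b (⋃ n, X n) ≤ Filter.liminf (fun n => b (X n)) Filter.atTop)
    (h3a : ∀ X : ℕ → Set V, Antitone X →
      b (⋂ n, X n) ≤ Filter.liminf (fun n => b (X n)) Filter.atTop)
    (h4 : ∀ u v : V, u ≠ v → lamB b u v < ⊤)
    :
    ∃ L : Set (Set V), Laminar L ∧
      (∀ Z ∈ L, ∃ x y : V, x ≠ y ∧ IsOptCut b x y Z) ∧
      (∀ u v : V, u ≠ v → ∃ Z ∈ L, SepOptimally b u v Z) :=
  exists_laminar_system_general b h1 h2 h3m h3a h4
end
end

section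
/- Let V be a nonempty countable set and b : P(V) → [0,∞] satisfy conditions (0), (1) symmetry, (2) submodularity, (3'), and (4). Then for every u ≠ v ∈ V there exists a ⊆-smallest optimal u-v cut X_{u,v} (equal to the intersection of all optimal u-v cuts) and a ⊆-largest optimal u-v cut Y_{u,v} (equal to the union of all optimal u-v cuts). -/
open Set Filter Topology ENNReal

noncomputable section

/-- There is a `⊆`-smallest optimal `u-v` cut (the intersection of all optimal `u-v` cuts)
and a `⊆`-largest optimal `u-v` cut (the union of all optimal `u-v` cuts). -/
theorem exists_least_and_greatest_optimal_cut {V : Type*} [Countable V] [Nonempty V]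
    (b : Set V → ℝ≥0∞)
    (h0 : ∀ X : Set V, b X = 0 ↔ X = ∅ ∨ X = Set.univ)
    (h1 : ∀ X : Set V, b Xᶜ = b X)
    (h2 : ∀ X Y : Set V, b (X ∩ Y) + b (X ∪ Y) ≤ b X + b Y)
    (h3m : ∀ X : ℕ → Set V, Monotone X →
      b (⋃ n, X n) ≤ Filter.liminf (fun n => b (X n)) Filter.atTop)
    (h3a : ∀ X : ℕ → Set V, Antitone X →
      b (⋂ n, X n) ≤ Filter.liminf (fun n => b (X n)) Filter.atTop)
    (h4 : ∀ u v : V, u ≠ v → lamB b u v < ⊤)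
    (u v : V) (huv : u ≠ v) :
    IsLeast {X : Set V | IsOptCut b u v X} (⋂₀ {X : Set V | IsOptCut b u v X}) ∧
      IsGreatest {X : Set V | IsOptCut b u v X} (⋃₀ {X : Set V | IsOptCut b u v X}) := by
  classical
  set L := lamB b u v with hLdef
  have hLne : L ≠ ⊤ := (h4 u v huv).ne
  have lam_le : ∀ X : Set V, u ∈ X → v ∉ X → L ≤ b X := fun X hu hv =>
    iInf₂_le X ⟨hu, hv⟩
  have key : ∀ A B : Set V, u ∈ A → v ∉ A → u ∈ B → v ∉ B →
      b (A ∩ B) + L ≤ b A + b B := by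
    intro A B hA1 hA2 hB1 hB2
    calc b (A ∩ B) + L ≤ b (A ∩ B) + b (A ∪ B) := by
          gcongr
          exact lam_le _ (Set.mem_union_left B hA1) (fun h => h.elim hA2 hB2)
      _ ≤ b A + b B := h2 A B
  have key' : ∀ A B : Set V, u ∈ A → v ∉ A → u ∈ B → v ∉ B →
      b (A ∪ B) + L ≤ b A + b B := by
    intro A B hA1 hA2 hB1 hB2
    calc b (A ∪ B) + L ≤ b (A ∪ B) + b (A ∩ B) := by
          gcongr
          exact lam_le _ ⟨hA1, hB1⟩ (fun h => hA2 h.1)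
      _ ≤ b A + b B := by rw [add_comm]; exact h2 A B
  -- Step 1: near-optimal cuts
  have step1 : ∀ n : ℕ, ∃ X : Set V, (u ∈ X ∧ v ∉ X) ∧ b X ≤ L + 2⁻¹ ^ n := by
    intro n
    have hlt : lamB b u v < L + 2⁻¹ ^ n := by
      rw [← hLdef]
      exact ENNReal.lt_add_right hLne (pow_ne_zero n (by simp))
    simp only [lamB, iInf_lt_iff] at hlt
    obtain ⟨X, hX, hbX⟩ := hlt
    exact ⟨X, hX, hbX.le⟩
  choose X hXcut hXb using step1
  -- geometric sum bound
  have geom : ∀ m j : ℕ,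
      (∑ k ∈ Finset.range (j + 1), (2⁻¹ : ℝ≥0∞) ^ (m + k)) ≤ 2⁻¹ ^ m * 2 := by
    intro m j
    calc (∑ k ∈ Finset.range (j + 1), (2⁻¹ : ℝ≥0∞) ^ (m + k))
        = 2⁻¹ ^ m * ∑ k ∈ Finset.range (j + 1), (2⁻¹ : ℝ≥0∞) ^ k := by
          rw [Finset.mul_sum]; simp [pow_add]
      _ ≤ 2⁻¹ ^ m * 2 := by
          gcongr
          calc (∑ k ∈ Finset.range (j + 1), (2⁻¹ : ℝ≥0∞) ^ k)
              ≤ ∑' k : ℕ, (2⁻¹ : ℝ≥0∞) ^ k := ENNReal.sum_le_tsum _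
            _ = 2 := by rw [ENNReal.tsum_geometric, ENNReal.one_sub_inv_two, inv_inv]
  -- finite intersections
  set Z : ℕ → ℕ → Set V := fun m j => ⋂ k, ⋂ (_ : k ≤ j), X (m + k) with hZdef
  have hZu : ∀ m j, u ∈ Z m j := by
    intro m j
    exact Set.mem_iInter₂.mpr fun k _ => (hXcut (m + k)).1
  have hZv : ∀ m j, v ∉ Z m j := by
    intro m j h
    exact (hXcut (m + 0)).2 (by simpa using Set.mem_iInter₂.mp h 0 (Nat.zero_le j))
  have hZb : ∀ m j, b (Z m j) ≤ L + ∑ k ∈ Finset.range (j + 1), (2⁻¹ : ℝ≥0∞) ^ (m + k) := by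
    intro m j
    induction j with
    | zero =>
        have : Z m 0 = X (m + 0) := by
          simp [hZdef, Nat.le_zero]
        rw [this]
        simpa using hXb (m + 0)
    | succ j ih =>
        have hset : Z m (j + 1) = Z m j ∩ X (m + (j + 1)) := by
          simp only [hZdef]
          rw [Set.biInter_le_succ]
        have h := key (Z m j) (X (m + (j + 1))) (hZu m j) (hZv m j)
          (hXcut _).1 (hXcut _).2
        rw [← hset] at h
        have h2' : b (Z m (j + 1)) + L ≤
            (L + ∑ k ∈ Finset.range (j + 2), (2⁻¹ : ℝ≥0∞) ^ (m + k)) + L := by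
          calc b (Z m (j + 1)) + L ≤ b (Z m j) + b (X (m + (j + 1))) := h
            _ ≤ (L + ∑ k ∈ Finset.range (j + 1), (2⁻¹ : ℝ≥0∞) ^ (m + k)) +
                (L + 2⁻¹ ^ (m + (j + 1))) := add_le_add ih (hXb _)
            _ = (L + ∑ k ∈ Finset.range (j + 2), (2⁻¹ : ℝ≥0∞) ^ (m + k)) + L := by
                conv_rhs => rw [Finset.sum_range_succ]
                ring
        exact (ENNReal.add_le_add_iff_right hLne).mp h2'
  -- tail intersections
  set W : ℕ → Set V := fun m => ⋂ k, X (m + k) with hWdef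
  have hWeq : ∀ m, (⋂ j, Z m j) = W m := by
    intro m
    ext x
    simp only [hZdef, hWdef, Set.mem_iInter]
    exact ⟨fun h k => h k k le_rfl, fun h j k _ => h k⟩
  have hZanti : ∀ m, Antitone (Z m) := by
    intro m i j hij x hx
    rw [Set.mem_iInter₂] at hx ⊢
    exact fun k hk => hx k (hk.trans hij)
  have hWb : ∀ m, b (W m) ≤ L + 2⁻¹ ^ m * 2 := by
    intro m
    calc b (W m) = b (⋂ j, Z m j) := by rw [hWeq]
      _ ≤ Filter.liminf (fun j => b (Z m j)) Filter.atTop := h3a _ (hZanti m)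
      _ ≤ Filter.liminf (fun _ : ℕ => L + 2⁻¹ ^ m * 2) Filter.atTop :=
          Filter.liminf_le_liminf
            (Filter.Eventually.of_forall fun j => (hZb m j).trans (by gcongr; exact geom m j))
      _ = L + 2⁻¹ ^ m * 2 := Filter.liminf_const _
  have hWu : ∀ m, u ∈ W m := fun m => Set.mem_iInter.mpr fun k => (hXcut (m + k)).1
  have hWv : ∀ m, v ∉ W m := by
    intro m h
    exact (hXcut (m + 0)).2 (Set.mem_iInter.mp h 0)
  have hWmono : Monotone W := by
    intro i j hij x hx
    rw [Set.mem_iInter] at hx ⊢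
    intro k
    have he : i + (j - i + k) = j + k := by omega
    have := hx (j - i + k)
    rwa [he] at this
  -- the limit cut Y
  have htend : Filter.Tendsto (fun m : ℕ => L + (2⁻¹ : ℝ≥0∞) ^ m * 2) Filter.atTop (𝓝 L) := by
    have h1 : Filter.Tendsto (fun m : ℕ => (2⁻¹ : ℝ≥0∞) ^ m * 2) Filter.atTop (𝓝 0) := by
      have := ENNReal.Tendsto.mul_const (b := 2) (ENNReal.tendsto_pow_atTop_nhds_zero_of_lt_one
        (by norm_num : (2⁻¹ : ℝ≥0∞) < 1)) (Or.inr (by simp))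
      simpa using this
    simpa using tendsto_const_nhds.add h1
  have hYopt : IsOptCut b u v (⋃ m, W m) := by
    refine ⟨Set.mem_iUnion.mpr ⟨0, hWu 0⟩, fun h => ?_, ?_⟩
    · obtain ⟨m, hm⟩ := Set.mem_iUnion.mp h
      exact hWv m hm
    · rw [← hLdef]
      refine le_antisymm ?_ (lam_le _ (Set.mem_iUnion.mpr ⟨0, hWu 0⟩)
        (fun h => (hWv _ (Set.mem_iUnion.mp h).choose_spec)))
      calc b (⋃ m, W m) ≤ Filter.liminf (fun m => b (W m)) Filter.atTop := h3m _ hWmono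
        _ ≤ Filter.liminf (fun m : ℕ => L + (2⁻¹ : ℝ≥0∞) ^ m * 2) Filter.atTop :=
            Filter.liminf_le_liminf (Filter.Eventually.of_forall hWb)
        _ = L := htend.liminf_eq
  -- S abbreviation
  set S : Set (Set V) := {X : Set V | IsOptCut b u v X} with hSdef
  have hE : (⋃ m, W m) ∈ S := hYopt
  -- binary closure
  have inter_mem : ∀ A B : Set V, A ∈ S → B ∈ S → A ∩ B ∈ S := by
    rintro A B ⟨hA1, hA2, hA3⟩ ⟨hB1, hB2, hB3⟩
    refine ⟨⟨hA1, hB1⟩, fun h => hA2 h.1, le_antisymm ?_ (lam_le _ ⟨hA1, hB1⟩ fun h => hA2 h.1)⟩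
    have h := key A B hA1 hA2 hB1 hB2
    rw [hA3, hB3, ← hLdef] at h
    exact (ENNReal.add_le_add_iff_right hLne).mp h
  have union_mem : ∀ A B : Set V, A ∈ S → B ∈ S → A ∪ B ∈ S := by
    rintro A B ⟨hA1, hA2, hA3⟩ ⟨hB1, hB2, hB3⟩
    refine ⟨Set.mem_union_left B hA1, fun h => h.elim hA2 hB2,
      le_antisymm ?_ (lam_le _ (Set.mem_union_left B hA1) fun h => h.elim hA2 hB2)⟩
    have h := key' A B hA1 hA2 hB1 hB2
    rw [hA3, hB3, ← hLdef] at h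
    exact (ENNReal.add_le_add_iff_right hLne).mp h
  have hSu : ∀ C ∈ S, u ∈ C := fun C hC => hC.1
  have hSv : ∀ C ∈ S, v ∉ C := fun C hC => hC.2.1
  have hSb : ∀ C ∈ S, b C = L := fun C hC => hC.2.2
  obtain ⟨f, hf⟩ := exists_surjective_nat V
  constructor
  · -- least
    set A : ℕ → Set V := fun n =>
      if h : ∃ C ∈ S, f n ∉ C then h.choose else ⋃ m, W m with hAdef
    have hAmem : ∀ n, A n ∈ S := by
      intro n
      simp only [hAdef]
      split
      · next h => exact h.choose_spec.1
      · exact hE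
    have hAspec : ∀ n C, C ∈ S → f n ∉ C → f n ∉ A n := by
      intro n C hC hfn
      have h : ∃ C ∈ S, f n ∉ C := ⟨C, hC, hfn⟩
      simp only [hAdef, dif_pos h]
      exact h.choose_spec.2
    have hIeq : (⋂ n, A n) = ⋂₀ S := by
      apply Set.Subset.antisymm
      · intro x hx C hC
        by_contra hxC
        obtain ⟨n, rfl⟩ := hf x
        exact hAspec n C hC hxC (Set.mem_iInter.mp hx n)
      · intro x hx
        exact Set.mem_iInter.mpr fun n => hx _ (hAmem n)
    set D : ℕ → Set V := fun n => ⋂ k, ⋂ (_ : k ≤ n), A k with hDdef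
    have hDmem : ∀ n, D n ∈ S := by
      intro n
      induction n with
      | zero => simpa [hDdef, Nat.le_zero] using hAmem 0
      | succ n ih =>
          have : D (n + 1) = D n ∩ A (n + 1) := by
            simp only [hDdef]; rw [Set.biInter_le_succ]
          rw [this]
          exact inter_mem _ _ ih (hAmem (n + 1))
    have hDanti : Antitone D := by
      intro i j hij x hx
      rw [Set.mem_iInter₂] at hx ⊢
      exact fun k hk => hx k (hk.trans hij)
    have hDeq : (⋂ n, D n) = ⋂ n, A n := by
      ext x
      simp only [hDdef, Set.mem_iInter]
      exact ⟨fun h k => h k k le_rfl, fun h j k _ => h k⟩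
    have hImem : ⋂₀ S ∈ S := by
      refine ⟨fun C hC => hSu C hC, fun h => hSv _ hE (h _ hE), le_antisymm ?_ ?_⟩
      · rw [← hIeq, ← hDeq, ← hLdef]
        calc b (⋂ n, D n) ≤ Filter.liminf (fun n => b (D n)) Filter.atTop := h3a _ hDanti
          _ = L := by
              have : (fun n => b (D n)) = fun _ : ℕ => L := funext fun n => hSb _ (hDmem n)
              rw [this]; exact Filter.liminf_const _
      · rw [← hLdef]
        exact lam_le _ (fun C hC => hSu C hC) (fun h => hSv _ hE (h _ hE))
    exact ⟨hImem, fun C hC => Set.sInter_subset_of_mem hC⟩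
  · -- greatest
    set A : ℕ → Set V := fun n =>
      if h : ∃ C ∈ S, f n ∈ C then h.choose else ⋃ m, W m with hAdef
    have hAmem : ∀ n, A n ∈ S := by
      intro n
      simp only [hAdef]
      split
      · next h => exact h.choose_spec.1
      · exact hE
    have hAspec : ∀ n C, C ∈ S → f n ∈ C → f n ∈ A n := by
      intro n C hC hfn
      have h : ∃ C ∈ S, f n ∈ C := ⟨C, hC, hfn⟩
      simp only [hAdef, dif_pos h]
      exact h.choose_spec.2
    have hIeq : (⋃ n, A n) = ⋃₀ S := by
      apply Set.Subset.antisymm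
      · intro x hx
        obtain ⟨n, hn⟩ := Set.mem_iUnion.mp hx
        exact ⟨A n, hAmem n, hn⟩
      · rintro x ⟨C, hC, hxC⟩
        obtain ⟨n, rfl⟩ := hf x
        exact Set.mem_iUnion.mpr ⟨n, hAspec n C hC hxC⟩
    set D : ℕ → Set V := fun n => ⋃ k, ⋃ (_ : k ≤ n), A k with hDdef
    have hDmem : ∀ n, D n ∈ S := by
      intro n
      induction n with
      | zero => simpa [hDdef, Nat.le_zero] using hAmem 0
      | succ n ih =>
          have : D (n + 1) = D n ∪ A (n + 1) := by
            simp only [hDdef]; rw [Set.biUnion_le_succ]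
          rw [this]
          exact union_mem _ _ ih (hAmem (n + 1))
    have hDmono : Monotone D := by
      intro i j hij x hx
      rw [Set.mem_iUnion₂] at hx ⊢
      obtain ⟨k, hk, hxk⟩ := hx
      exact ⟨k, hk.trans hij, hxk⟩
    have hDeq : (⋃ n, D n) = ⋃ n, A n := by
      ext x
      simp only [hDdef, Set.mem_iUnion]
      exact ⟨fun ⟨j, k, _, h⟩ => ⟨k, h⟩, fun ⟨k, h⟩ => ⟨k, k, le_rfl, h⟩⟩
    have hImem : ⋃₀ S ∈ S := by
      refine ⟨⟨⋃ m, W m, hE, hSu _ hE⟩, fun h => ?_, le_antisymm ?_ ?_⟩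
      · obtain ⟨C, hC, hvC⟩ := h
        exact hSv C hC hvC
      · rw [← hIeq, ← hDeq, ← hLdef]
        calc b (⋃ n, D n) ≤ Filter.liminf (fun n => b (D n)) Filter.atTop := h3m _ hDmono
          _ = L := by
              have : (fun n => b (D n)) = fun _ : ℕ => L := funext fun n => hSb _ (hDmem n)
              rw [this]; exact Filter.liminf_const _
      · rw [← hLdef]
        refine lam_le _ ⟨⋃ m, W m, hE, hSu _ hE⟩ fun h => ?_
        obtain ⟨C, hC, hvC⟩ := h
        exact hSv C hC hvC
    exact ⟨hImem, fun C hC => Set.subset_sUnion_of_mem hC⟩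
end
end

section
/- Let V be a nonempty countable set and b : P(V) → [0,∞] satisfy conditions (0), (1) symmetry, (2) submodularity, (3'), and (4). If L is a laminar system of optimal cuts and u ≠ v ∈ V, then there exists a cut X* such that L ∪ {X*} is laminar and X* separates u and v optimally. -/
open Set Filter Topology ENNReal

noncomputable section

namespace LamExtAux

variable {V : Type*}

/-- 4-way nestedness. -/
def N4 (Z W : Set V) : Prop := Z ∩ W = ∅ ∨ Z ⊆ W ∨ W ⊆ Z ∨ Z ∪ W = Set.univ

/-- Crossing: all four corners nonempty. -/
def Crossing (X B : Set V) : Prop :=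
  (X ∩ B).Nonempty ∧ (X \ B).Nonempty ∧ (B \ X).Nonempty ∧ ((X ∪ B)ᶜ).Nonempty

lemma n4_symm {Z W : Set V} (h : N4 Z W) : N4 W Z := by
  rcases h with h | h | h | h
  · exact Or.inl (by rwa [Set.inter_comm])
  · exact Or.inr (Or.inr (Or.inl h))
  · exact Or.inr (Or.inl h)
  · exact Or.inr (Or.inr (Or.inr (by rwa [Set.union_comm])))

lemma n4_compl_right {Z W : Set V} : N4 Z Wᶜ ↔ N4 Z W := by
  constructor
  · rintro (h | h | h | h)
    · refine Or.inr (Or.inl ?_)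
      intro a ha
      by_contra haW
      exact absurd (Set.mem_inter ha (Set.mem_compl haW)) (by simp [h])
    · refine Or.inl ?_
      ext a; simp only [Set.mem_inter_iff, Set.mem_empty_iff_false, iff_false]
      rintro ⟨haZ, haW⟩; exact (h haZ) haW
    · refine Or.inr (Or.inr (Or.inr ?_))
      ext a; simp only [Set.mem_union, Set.mem_univ, iff_true]
      by_cases haW : a ∈ W
      · exact Or.inr haW
      · exact Or.inl (h (Set.mem_compl haW))
    · refine Or.inr (Or.inr (Or.inl ?_))
      intro a haW
      have : a ∈ Z ∪ Wᶜ := h ▸ Set.mem_univ a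
      rcases this with h' | h'
      · exact h'
      · exact absurd haW h'
  · rintro (h | h | h | h)
    · refine Or.inr (Or.inl ?_)
      intro a ha haW
      exact absurd (Set.mem_inter ha (by simpa using haW)) (by simp [h])
    · refine Or.inl ?_
      ext a; simp only [Set.mem_inter_iff, Set.mem_empty_iff_false, iff_false, Set.mem_compl_iff]
      rintro ⟨haZ, haW⟩; exact haW (h haZ)
    · refine Or.inr (Or.inr (Or.inr ?_))
      ext a; simp only [Set.mem_union, Set.mem_univ, iff_true, Set.mem_compl_iff]
      by_cases haZ : a ∈ Z
      · exact Or.inl haZ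
      · exact Or.inr (fun haW => haZ (h haW))
    · refine Or.inr (Or.inr (Or.inl ?_))
      intro a haW
      have : a ∈ Z ∪ W := h ▸ Set.mem_univ a
      rcases this with h' | h'
      · exact h'
      · exact absurd h' (by simpa using haW)

lemma n4_compl_left {Z W : Set V} : N4 Zᶜ W ↔ N4 Z W :=
  ⟨fun h => n4_symm (n4_compl_right.mp (n4_symm h)),
   fun h => n4_symm (n4_compl_right.mpr (n4_symm h))⟩

lemma not_n4_crossing {X B : Set V} (h : ¬ N4 X B) : Crossing X B := by
  rw [N4] at h
  push_neg at h
  obtain ⟨h1, h2, h3, h4⟩ := h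
  refine ⟨h1, ?_, ?_, ?_⟩
  · obtain ⟨a, ha, hb⟩ := Set.not_subset.mp h2; exact ⟨a, ha, hb⟩
  · obtain ⟨a, ha, hb⟩ := Set.not_subset.mp h3; exact ⟨a, ha, hb⟩
  · have := Set.ne_univ_iff_exists_notMem _ |>.mp h4
    obtain ⟨a, ha⟩ := this
    exact ⟨a, by simpa using ha⟩

lemma crossing_compl_right {X B : Set V} (h : Crossing X B) : Crossing X Bᶜ := by
  obtain ⟨c1, c2, c3, c4⟩ := h
  refine ⟨?_, ?_, ?_, ?_⟩
  · obtain ⟨a, ha, hb⟩ := c2; exact ⟨a, ha, hb⟩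
  · obtain ⟨a, ha, hb⟩ := c1; exact ⟨a, ha, by simpa using hb⟩
  · obtain ⟨a, ha⟩ := c4
    simp only [Set.mem_compl_iff, Set.mem_union] at ha
    push_neg at ha
    exact ⟨a, by simp [ha.1, ha.2]⟩
  · obtain ⟨a, ha, hb⟩ := c3
    exact ⟨a, by simp [hb, ha]⟩

lemma crossing_compl_left {X B : Set V} (h : Crossing X B) : Crossing Xᶜ B := by
  obtain ⟨c1, c2, c3, c4⟩ := h
  refine ⟨?_, ?_, ?_, ?_⟩
  · obtain ⟨a, ha, hb⟩ := c3; exact ⟨a, by simp [ha, hb]⟩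
  · obtain ⟨a, ha⟩ := c4
    simp only [Set.mem_compl_iff, Set.mem_union] at ha
    push_neg at ha
    exact ⟨a, by simp [ha.1, ha.2]⟩
  · obtain ⟨a, ha, hb⟩ := c1; exact ⟨a, by simp [ha, hb]⟩
  · obtain ⟨a, ha, hb⟩ := c2
    exact ⟨a, by simp [ha, hb]⟩

/-- Claim P for the corner `X ∩ B`. -/
lemma p1 {X B Z : Set V} (hc : Crossing X B) (hZX : N4 Z X) (hZB : N4 Z B) :
    N4 Z (X ∩ B) := by
  obtain ⟨c1, c2, c3, c4⟩ := hc
  rcases hZX with hE | hS | hB | hU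
  · -- Z ∩ X = ∅
    refine Or.inl ?_
    ext a; simp only [Set.mem_inter_iff, Set.mem_empty_iff_false, iff_false]
    rintro ⟨haZ, haX, _⟩
    exact absurd (Set.mem_inter haZ haX) (by simp [hE])
  · -- Z ⊆ X
    rcases hZB with hE | hS' | hB' | hU'
    · refine Or.inl ?_
      ext a; simp only [Set.mem_inter_iff, Set.mem_empty_iff_false, iff_false]
      rintro ⟨haZ, _, haB⟩
      exact absurd (Set.mem_inter haZ haB) (by simp [hE])
    · exact Or.inr (Or.inl (Set.subset_inter hS hS'))
    · -- B ⊆ Z ⊆ X contradicts c3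
      obtain ⟨a, haB, haX⟩ := c3
      exact absurd (hS (hB' haB)) haX
    · -- Z ∪ B = univ, Z ⊆ X contradicts c4
      obtain ⟨a, ha⟩ := c4
      simp only [Set.mem_compl_iff, Set.mem_union] at ha
      push_neg at ha
      have : a ∈ Z ∪ B := hU' ▸ Set.mem_univ a
      rcases this with h' | h'
      · exact absurd (hS h') ha.1
      · exact absurd h' ha.2
  · -- X ⊆ Z
    exact Or.inr (Or.inr (Or.inl (fun a ha => hB ha.1)))
  · -- Z ∪ X = univ
    rcases hZB with hE | hS' | hB' | hU'
    · -- c3 contradiction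
      obtain ⟨a, haB, haX⟩ := c3
      have : a ∈ Z ∪ X := hU ▸ Set.mem_univ a
      rcases this with h' | h'
      · exact absurd (Set.mem_inter h' haB) (by simp [hE])
      · exact absurd h' haX
    · -- Z ⊆ B with Z ∪ X = univ contradicts c4
      obtain ⟨a, ha⟩ := c4
      simp only [Set.mem_compl_iff, Set.mem_union] at ha
      push_neg at ha
      have : a ∈ Z ∪ X := hU ▸ Set.mem_univ a
      rcases this with h' | h'
      · exact absurd (hS' h') ha.2
      · exact absurd h' ha.1
    · exact Or.inr (Or.inr (Or.inl (fun a ha => hB' ha.2)))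
    · refine Or.inr (Or.inr (Or.inr ?_))
      ext a; simp only [Set.mem_union, Set.mem_univ, iff_true, Set.mem_inter_iff]
      by_cases haZ : a ∈ Z
      · exact Or.inl haZ
      · refine Or.inr ⟨?_, ?_⟩
        · have : a ∈ Z ∪ X := hU ▸ Set.mem_univ a
          rcases this with h' | h'
          · exact absurd h' haZ
          · exact h'
        · have : a ∈ Z ∪ B := hU' ▸ Set.mem_univ a
          rcases this with h' | h'
          · exact absurd h' haZ
          · exact h'

/-- Claim P for the corner `X ∪ B`. -/
lemma p2 {X B Z : Set V} (hc : Crossing X B) (hZX : N4 Z X) (hZB : N4 Z B) :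
    N4 Z (X ∪ B) := by
  have h := p1 (X := Xᶜ) (B := Bᶜ) (crossing_compl_left (crossing_compl_right hc))
    (n4_compl_right.mpr hZX) (n4_compl_right.mpr hZB)
  rw [← Set.compl_union] at h
  exact n4_compl_right.mp h

/-- Claim P for the corner `X \ B`. -/
lemma p3 {X B Z : Set V} (hc : Crossing X B) (hZX : N4 Z X) (hZB : N4 Z B) :
    N4 Z (X \ B) := by
  have h := p1 (X := X) (B := Bᶜ) (crossing_compl_right hc) hZX (n4_compl_right.mpr hZB)
  rwa [← Set.diff_eq] at h




variable {V : Type*}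

lemma lamB_le_cut (b : Set V → ℝ≥0∞) {u v : V} {X : Set V} (hu : u ∈ X) (hv : v ∉ X) :
    lamB b u v ≤ b X :=
  iInf₂_le X ⟨hu, hv⟩

lemma opt_lattice (b : Set V → ℝ≥0∞)
    (h2 : ∀ X Y : Set V, b (X ∩ Y) + b (X ∪ Y) ≤ b X + b Y)
    {u v : V} (hlt : lamB b u v ≠ ⊤) {X Y : Set V}
    (hXu : u ∈ X) (hXv : v ∉ X) (hXb : b X ≤ lamB b u v)
    (hYu : u ∈ Y) (hYv : v ∉ Y) (hYb : b Y ≤ lamB b u v) :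
    b (X ∩ Y) ≤ lamB b u v ∧ b (X ∪ Y) ≤ lamB b u v := by
  have hi : lamB b u v ≤ b (X ∩ Y) := lamB_le_cut b ⟨hXu, hYu⟩ (fun h => hXv h.1)
  have hs : lamB b u v ≤ b (X ∪ Y) :=
    lamB_le_cut b (Set.mem_union_left _ hXu) (fun h => h.elim hXv hYv)
  have hsum : b (X ∩ Y) + b (X ∪ Y) ≤ lamB b u v + lamB b u v :=
    (h2 X Y).trans (add_le_add hXb hYb)
  constructor
  · have : b (X ∩ Y) + lamB b u v ≤ lamB b u v + lamB b u v :=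
      le_trans (add_le_add le_rfl hs) hsum
    exact (ENNReal.add_le_add_iff_right hlt).mp (by rwa [add_comm (lamB b u v)] at this)
  · have : lamB b u v + b (X ∪ Y) ≤ lamB b u v + lamB b u v :=
      le_trans (add_le_add hi le_rfl) hsum
    exact (ENNReal.add_le_add_iff_left hlt).mp this

/-- Key limit lemma: a sequence of near-optimal `u-v` cuts has its `liminf` set an
optimal cut. -/
lemma key_liminf (b : Set V → ℝ≥0∞)
    (h2 : ∀ X Y : Set V, b (X ∩ Y) + b (X ∪ Y) ≤ b X + b Y)
    (h3m : ∀ X : ℕ → Set V, Monotone X →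
      b (⋃ n, X n) ≤ Filter.liminf (fun n => b (X n)) Filter.atTop)
    (h3a : ∀ X : ℕ → Set V, Antitone X →
      b (⋂ n, X n) ≤ Filter.liminf (fun n => b (X n)) Filter.atTop)
    {u v : V} (hlt : lamB b u v ≠ ⊤)
    (X : ℕ → Set V) (hu : ∀ n, u ∈ X n) (hv : ∀ n, v ∉ X n)
    (hb : ∀ n, b (X n) ≤ lamB b u v + 2⁻¹ ^ n) :
    u ∈ (⋃ m, ⋂ n, X (m + n)) ∧ v ∉ (⋃ m, ⋂ n, X (m + n)) ∧
      b (⋃ m, ⋂ n, X (m + n)) ≤ lamB b u v := by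
  set lam := lamB b u v with hlam
  -- partial intersections
  set Z : ℕ → ℕ → Set V := fun m k => ⋂ n ∈ Finset.range (k + 1), X (m + n) with hZ
  have hZu : ∀ m k, u ∈ Z m k := by
    intro m k; exact Set.mem_iInter₂.mpr fun n _ => hu (m + n)
  have hZv : ∀ m k, v ∉ Z m k := by
    intro m k h
    exact hv (m + 0) (Set.mem_iInter₂.mp h 0 (Finset.mem_range.mpr (Nat.succ_pos _)))
  have hZanti : ∀ m, Antitone (Z m) := by
    intro m k k' hkk'
    exact Set.biInter_subset_biInter_left (Finset.range_subset_range.mpr (by omega))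
  have hZsucc : ∀ m k, Z m (k + 1) = Z m k ∩ X (m + (k + 1)) := by
    intro m k
    rw [hZ]
    simp only []
    rw [Finset.range_add_one, Finset.set_biInter_insert, Set.inter_comm]
  -- bound on partial intersections
  have hZb : ∀ m k, b (Z m k) ≤ lam + ∑ n ∈ Finset.range (k + 1), 2⁻¹ ^ (m + n) := by
    intro m k
    induction k with
    | zero =>
      have : Z m 0 = X m := by
        rw [hZ]; simp
      rw [this]
      simpa using hb m
    | succ k ih =>
      have hcut : lam ≤ b (Z m k ∪ X (m + (k + 1))) :=
        lamB_le_cut b (Set.mem_union_left _ (hZu m k)) (fun h => h.elim (hZv m k) (hv _))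
      have hstep : b (Z m (k + 1)) + lam ≤ b (Z m k) + b (X (m + (k + 1))) := by
        calc b (Z m (k + 1)) + lam ≤ b (Z m (k + 1)) + b (Z m k ∪ X (m + (k + 1))) :=
              add_le_add le_rfl hcut
        _ = b (Z m k ∩ X (m + (k + 1))) + b (Z m k ∪ X (m + (k + 1))) := by
              rw [hZsucc m k]
        _ ≤ b (Z m k) + b (X (m + (k + 1))) := h2 _ _
      have hbound : b (Z m (k + 1)) + lam ≤
          (lam + ∑ n ∈ Finset.range (k + 2), 2⁻¹ ^ (m + n)) + lam := by
        calc b (Z m (k + 1)) + lam ≤ b (Z m k) + b (X (m + (k + 1))) := hstep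
        _ ≤ (lam + ∑ n ∈ Finset.range (k + 1), 2⁻¹ ^ (m + n)) + (lam + 2⁻¹ ^ (m + (k + 1))) :=
              add_le_add ih (hb _)
        _ = (lam + ∑ n ∈ Finset.range (k + 2), 2⁻¹ ^ (m + n)) + lam := by
              rw [Finset.sum_range_succ _ (k + 1)]; ring
      exact (ENNReal.add_le_add_iff_right hlt).mp hbound
  -- geometric bound
  have hsum : ∀ m k, (∑ n ∈ Finset.range (k + 1), (2⁻¹ : ℝ≥0∞) ^ (m + n)) ≤ 2⁻¹ ^ m * 2 := by
    intro m k
    have : (∑ n ∈ Finset.range (k + 1), (2⁻¹ : ℝ≥0∞) ^ (m + n))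
        = 2⁻¹ ^ m * ∑ n ∈ Finset.range (k + 1), (2⁻¹ : ℝ≥0∞) ^ n := by
      rw [Finset.mul_sum]
      exact Finset.sum_congr rfl fun n _ => pow_add _ _ _
    rw [this]
    refine mul_le_mul_right ?_ _
    calc (∑ n ∈ Finset.range (k + 1), (2⁻¹ : ℝ≥0∞) ^ n) ≤ ∑' n, (2⁻¹ : ℝ≥0∞) ^ n :=
          ENNReal.sum_le_tsum _
    _ = 2 := by
          rw [ENNReal.tsum_geometric, ENNReal.one_sub_inv_two, inv_inv]
  -- tail intersections
  set W : ℕ → Set V := fun m => ⋂ n, X (m + n) with hW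
  have hWZ : ∀ m, W m = ⋂ k, Z m k := by
    intro m
    ext a
    simp only [hW, hZ, Set.mem_iInter, Set.mem_iInter₂]
    constructor
    · intro h k n _; exact h n
    · intro h n; exact h n n (Finset.mem_range.mpr (by omega))
  have hWb : ∀ m, b (W m) ≤ lam + 2⁻¹ ^ m * 2 := by
    intro m
    rw [hWZ m]
    refine le_trans (h3a (Z m) (hZanti m)) ?_
    refine le_trans (Filter.liminf_le_liminf (Filter.Eventually.of_forall fun k =>
      le_trans (hZb m k) (add_le_add le_rfl (hsum m k)))) ?_
    simp [Filter.liminf_const]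
  have hWmono : Monotone W := by
    apply monotone_nat_of_le_succ
    intro m a ha
    simp only [hW, Set.mem_iInter] at ha ⊢
    intro n
    have := ha (n + 1)
    rwa [show m + (n + 1) = m + 1 + n by omega] at this
  have hWu : ∀ m, u ∈ W m := fun m => Set.mem_iInter.mpr fun n => hu _
  have hWv : ∀ m, v ∉ W m := fun m h => hv (m + 0) (Set.mem_iInter.mp h 0)
  refine ⟨Set.mem_iUnion.mpr ⟨0, hWu 0⟩, ?_, ?_⟩
  · intro h
    obtain ⟨m, hm⟩ := Set.mem_iUnion.mp h
    exact hWv m hm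
  · refine le_trans (h3m W hWmono) ?_
    have htend : Filter.Tendsto (fun m => lam + (2⁻¹ : ℝ≥0∞) ^ m * 2) Filter.atTop (nhds lam) := by
      have h0 : Filter.Tendsto (fun m => ((2⁻¹ : ℝ≥0∞) ^ m)) Filter.atTop (nhds 0) :=
        ENNReal.tendsto_pow_atTop_nhds_zero_of_lt_one (by norm_num)
      have h1 : Filter.Tendsto (fun m => ((2⁻¹ : ℝ≥0∞) ^ m * 2)) Filter.atTop (nhds 0) := by
        have := ENNReal.Tendsto.mul_const h0 (Or.inr (by norm_num : (2 : ℝ≥0∞) ≠ ⊤))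
        simpa using this
      have := Filter.Tendsto.add (tendsto_const_nhds (x := lam)) h1
      simpa using this
    calc Filter.liminf (fun m => b (W m)) Filter.atTop
        ≤ Filter.liminf (fun m => lam + (2⁻¹ : ℝ≥0∞) ^ m * 2) Filter.atTop :=
          Filter.liminf_le_liminf (Filter.Eventually.of_forall hWb)
    _ = lam := htend.liminf_eq

/-- Existence of an optimal cut. -/
lemma exists_opt (b : Set V → ℝ≥0∞)
    (h2 : ∀ X Y : Set V, b (X ∩ Y) + b (X ∪ Y) ≤ b X + b Y)
    (h3m : ∀ X : ℕ → Set V, Monotone X →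
      b (⋃ n, X n) ≤ Filter.liminf (fun n => b (X n)) Filter.atTop)
    (h3a : ∀ X : ℕ → Set V, Antitone X →
      b (⋂ n, X n) ≤ Filter.liminf (fun n => b (X n)) Filter.atTop)
    {u v : V} (huv : u ≠ v) (hlt : lamB b u v ≠ ⊤) :
    ∃ Y : Set V, u ∈ Y ∧ v ∉ Y ∧ b Y ≤ lamB b u v := by
  have hex : ∀ n : ℕ, ∃ X : Set V, (u ∈ X ∧ v ∉ X) ∧ b X ≤ lamB b u v + 2⁻¹ ^ n := by
    intro n
    by_contra h
    push_neg at h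
    have hle : lamB b u v + 2⁻¹ ^ n ≤ lamB b u v := by
      refine le_iInf₂ fun X hX => ?_
      exact le_of_lt (h X hX)
    have hlt2 : lamB b u v < lamB b u v + 2⁻¹ ^ n := by
      exact ENNReal.lt_add_right hlt (pow_ne_zero n (ENNReal.inv_ne_zero.mpr (by norm_num)))
    exact absurd (lt_of_lt_of_le hlt2 hle) (lt_irrefl _)
  choose Xs hXs using hex
  obtain ⟨h1, h2', h3⟩ := key_liminf b h2 h3m h3a hlt Xs
    (fun n => (hXs n).1.1) (fun n => (hXs n).1.2) (fun n => (hXs n).2)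
  exact ⟨_, h1, h2', h3⟩


/-- Uncrossing, oriented case: `v ∉ A`. -/
lemma uncross_aux (b : Set V → ℝ≥0∞)
    (h1 : ∀ X : Set V, b Xᶜ = b X)
    (h2 : ∀ X Y : Set V, b (X ∩ Y) + b (X ∪ Y) ≤ b X + b Y)
    {u v x y : V} {X A : Set V}
    (hx : x ∈ A) (hy : y ∉ A)
    (hAopt : ∀ C : Set V, x ∈ C → y ∉ C → b A ≤ b C)
    (hAtop : b A ≠ ⊤)
    (hXu : u ∈ X) (hXv : v ∉ X) (hXb : b X ≤ lamB b u v)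
    (hvA : v ∉ A) :
    ∃ Y : Set V, (u ∈ Y ∧ v ∉ Y ∧ b Y ≤ lamB b u v) ∧
      (Y = X ∩ A ∨ Y = X ∪ A ∨ Y = X \ A ∨ Y = A) := by
  have hAoptc : ∀ C : Set V, x ∉ C → y ∈ C → b A ≤ b C := by
    intro C hxC hyC
    rw [← h1 C]
    exact hAopt Cᶜ (Set.mem_compl hxC) (fun h => h hyC)
  by_cases huA : u ∈ A
  · by_cases hyX : y ∈ X
    · by_cases hxX : x ∈ X
      · -- Y = X ∪ A
        refine ⟨X ∪ A, ⟨Set.mem_union_left _ hXu, fun h => h.elim hXv hvA, ?_⟩,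
          Or.inr (Or.inl rfl)⟩
        have hiA : b A ≤ b (X ∩ A) := hAopt _ ⟨hxX, hx⟩ (fun h => hy h.2)
        have : b A + b (X ∪ A) ≤ b X + b A :=
          le_trans (add_le_add hiA le_rfl) (h2 X A)
        rw [add_comm (b X)] at this
        exact le_trans ((ENNReal.add_le_add_iff_left hAtop).mp this) hXb
      · -- Y = A
        refine ⟨A, ⟨huA, hvA, ?_⟩, Or.inr (Or.inr (Or.inr rfl))⟩
        have k1 : b A ≤ b (X ∩ Aᶜ) := by
          rw [← h1 (X ∩ Aᶜ)]
          refine hAopt _ ?_ ?_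
          · rw [Set.compl_inter, compl_compl]
            exact Or.inr hx
          · rw [Set.compl_inter, compl_compl]
            rintro (h | h)
            · exact h hyX
            · exact hy h
        have k2 : b A ≤ b (X ∪ Aᶜ) := by
          refine hAoptc _ ?_ (Or.inl hyX)
          rintro (h | h)
          · exact hxX h
          · exact h hx
        have hsum : b A + b A ≤ b X + b A := by
          calc b A + b A ≤ b (X ∩ Aᶜ) + b (X ∪ Aᶜ) := add_le_add k1 k2
          _ ≤ b X + b Aᶜ := h2 X Aᶜ
          _ = b X + b A := by rw [h1]
        exact le_trans ((ENNReal.add_le_add_iff_right hAtop).mp hsum) hXb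
    · -- Y = X ∩ A
      refine ⟨X ∩ A, ⟨⟨hXu, huA⟩, fun h => hXv h.1, ?_⟩, Or.inl rfl⟩
      have hsA : b A ≤ b (X ∪ A) := hAopt _ (Or.inr hx) (fun h => h.elim hyX hy)
      have : b (X ∩ A) + b A ≤ b X + b A :=
        le_trans (add_le_add le_rfl hsA) (h2 X A)
      exact le_trans ((ENNReal.add_le_add_iff_right hAtop).mp this) hXb
  · by_cases hxX : x ∈ X
    · -- Y = X ∪ A
      refine ⟨X ∪ A, ⟨Set.mem_union_left _ hXu, fun h => h.elim hXv hvA, ?_⟩,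
        Or.inr (Or.inl rfl)⟩
      have hiA : b A ≤ b (X ∩ A) := hAopt _ ⟨hxX, hx⟩ (fun h => hy h.2)
      have : b A + b (X ∪ A) ≤ b X + b A :=
        le_trans (add_le_add hiA le_rfl) (h2 X A)
      rw [add_comm (b X)] at this
      exact le_trans ((ENNReal.add_le_add_iff_left hAtop).mp this) hXb
    · -- Y = X \ A
      refine ⟨X \ A, ⟨⟨hXu, huA⟩, fun h => hXv h.1, ?_⟩, Or.inr (Or.inr (Or.inl rfl))⟩
      have k2 : b A ≤ b (X ∪ Aᶜ) := by
        refine hAoptc _ ?_ (Or.inr (Set.mem_compl hy))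
        rintro (h | h)
        · exact hxX h
        · exact h hx
      have hsum : b (X \ A) + b A ≤ b X + b A := by
        calc b (X \ A) + b A ≤ b (X ∩ Aᶜ) + b (X ∪ Aᶜ) := by
              rw [Set.diff_eq]
              exact add_le_add le_rfl k2
        _ ≤ b X + b Aᶜ := h2 X Aᶜ
        _ = b X + b A := by rw [h1]
      exact le_trans ((ENNReal.add_le_add_iff_right hAtop).mp hsum) hXb

/-- Full uncrossing lemma with preservation of nestedness. -/
lemma uncross (b : Set V → ℝ≥0∞)
    (h1 : ∀ X : Set V, b Xᶜ = b X)
    (h2 : ∀ X Y : Set V, b (X ∩ Y) + b (X ∪ Y) ≤ b X + b Y)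
    {u v x y : V} {X A : Set V}
    (hxy : x ≠ y) (hIs : IsOptCut b x y A)
    (hxytop : lamB b x y ≠ ⊤)
    (hXu : u ∈ X) (hXv : v ∉ X) (hXb : b X ≤ lamB b u v)
    (hcross : ¬ N4 X A) :
    ∃ Y : Set V, (u ∈ Y ∧ v ∉ Y ∧ b Y ≤ lamB b u v) ∧ N4 Y A ∧
      (∀ Z : Set V, N4 Z X → N4 Z A → N4 Z Y) := by
  obtain ⟨hxA, hyA, hbA⟩ := hIs
  have hc : Crossing X A := not_n4_crossing hcross
  have hAtop : b A ≠ ⊤ := by rw [hbA]; exact hxytop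
  have hAopt : ∀ C : Set V, x ∈ C → y ∉ C → b A ≤ b C := by
    intro C hC1 hC2
    rw [hbA]
    exact lamB_le_cut b hC1 hC2
  by_cases hvA : v ∈ A
  · -- work with Aᶜ
    have hAopt' : ∀ C : Set V, y ∈ C → x ∉ C → b Aᶜ ≤ b C := by
      intro C hC1 hC2
      rw [h1, ← h1 C]
      exact hAopt Cᶜ (Set.mem_compl hC2) (fun h => h hC1)
    obtain ⟨Y, hYcut, hshape⟩ := uncross_aux b h1 h2 (Set.mem_compl hyA)
      (fun h => h hxA) hAopt' (by rwa [h1]) hXu hXv hXb (fun h => h hvA)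
    have hcA : Crossing X Aᶜ := crossing_compl_right hc
    refine ⟨Y, hYcut, ?_, ?_⟩
    · rcases hshape with rfl | rfl | rfl | rfl
      · exact Or.inl (by rw [Set.inter_assoc, Set.compl_inter_self, Set.inter_empty])
      · refine Or.inr (Or.inr (Or.inr ?_))
        rw [Set.union_assoc, Set.compl_union_self, Set.union_univ]
      · refine Or.inr (Or.inl ?_)
        intro a ha
        by_contra haA
        exact ha.2 (Set.mem_compl haA)
      · exact Or.inl (Set.compl_inter_self A)
    · intro Z hZX hZA
      have hZA' : N4 Z Aᶜ := n4_compl_right.mpr hZA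
      rcases hshape with rfl | rfl | rfl | rfl
      · exact p1 hcA hZX hZA'
      · exact p2 hcA hZX hZA'
      · exact p3 hcA hZX hZA'
      · exact hZA'
  · obtain ⟨Y, hYcut, hshape⟩ := uncross_aux b h1 h2 hxA hyA hAopt hAtop hXu hXv hXb hvA
    refine ⟨Y, hYcut, ?_, ?_⟩
    · rcases hshape with rfl | rfl | rfl | rfl
      · exact Or.inr (Or.inl Set.inter_subset_right)
      · exact Or.inr (Or.inr (Or.inl Set.subset_union_right))
      · exact Or.inl (by rw [Set.diff_eq, Set.inter_assoc, Set.compl_inter_self,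
          Set.inter_empty])
      · exact Or.inr (Or.inl le_rfl)
    · intro Z hZX hZA
      rcases hshape with rfl | rfl | rfl | rfl
      · exact p1 hc hZX hZA
      · exact p2 hc hZX hZA
      · exact p3 hc hZX hZA
      · exact hZA

/-- Finite uncrossing: for every finite subfamily of `L` there is an optimal cut
4-nested with all its members. -/
lemma finite_nested (b : Set V → ℝ≥0∞)
    (h1 : ∀ X : Set V, b Xᶜ = b X)
    (h2 : ∀ X Y : Set V, b (X ∩ Y) + b (X ∪ Y) ≤ b X + b Y)
    (h3m : ∀ X : ℕ → Set V, Monotone X →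
      b (⋃ n, X n) ≤ Filter.liminf (fun n => b (X n)) Filter.atTop)
    (h3a : ∀ X : ℕ → Set V, Antitone X →
      b (⋂ n, X n) ≤ Filter.liminf (fun n => b (X n)) Filter.atTop)
    (h4 : ∀ u v : V, u ≠ v → lamB b u v < ⊤)
    (L : Set (Set V)) (hlamL : Laminar L)
    (hopt : ∀ Z ∈ L, ∃ x y : V, x ≠ y ∧ IsOptCut b x y Z)
    {u v : V} (huv : u ≠ v)
    (S : Finset (Set V)) (hS : ↑S ⊆ L) :
    ∃ Y : Set V, (u ∈ Y ∧ v ∉ Y ∧ b Y ≤ lamB b u v) ∧ ∀ A ∈ S, N4 Y A := by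
  classical
  induction S using Finset.induction_on with
  | empty =>
    obtain ⟨Y, hY⟩ := exists_opt b h2 h3m h3a huv (h4 u v huv).ne
    exact ⟨Y, hY, fun A hA => absurd hA (Finset.notMem_empty A)⟩
  | @insert A S' hA ih =>
    have hS' : ↑S' ⊆ L := fun B hB => hS (by simp [hB])
    have hAL : A ∈ L := hS (by simp)
    obtain ⟨Y, hY, hYS⟩ := ih hS'
    by_cases hN : N4 Y A
    · refine ⟨Y, hY, fun B hB => ?_⟩
      rcases Finset.mem_insert.mp hB with rfl | hB
      · exact hN
      · exact hYS B hB
    · obtain ⟨x, y, hxy, hIs⟩ := hopt A hAL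
      obtain ⟨Y', hY', hY'A, hpres⟩ := uncross b h1 h2 hxy hIs (h4 x y hxy).ne
        hY.1 hY.2.1 hY.2.2 hN
      refine ⟨Y', hY', fun B hB => ?_⟩
      rcases Finset.mem_insert.mp hB with rfl | hB
      · exact hY'A
      · have hBA : N4 B A := by
          rcases hlamL A hAL B (hS' hB) with h | h | h
          · exact Or.inl (by rwa [Set.inter_comm])
          · exact Or.inr (Or.inr (Or.inl h))
          · exact Or.inr (Or.inl h)
        exact n4_symm (hpres B (n4_symm (hYS B hB)) hBA)

section Topology

variable [Countable V]

/-- Characteristic-function coding of sets. -/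
def toSet (f : V → Bool) : Set V := {w | f w = true}

lemma mem_toSet {f : V → Bool} {w : V} : w ∈ toSet f ↔ f w = true := Iff.rfl

lemma isClosed_all (S : Set V) (c : Bool) :
    IsClosed {f : V → Bool | ∀ w ∈ S, f w = c} := by
  have : {f : V → Bool | ∀ w ∈ S, f w = c} = ⋂ w ∈ S, {f : V → Bool | f w = c} := by
    ext f; simp
  rw [this]
  exact isClosed_biInter fun w _ => isClosed_eq (continuous_apply w) continuous_const

lemma isClosed_n4 (A : Set V) : IsClosed {f : V → Bool | N4 (toSet f) A} := by
  have hrw : {f : V → Bool | N4 (toSet f) A} =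
      ({f : V → Bool | ∀ w ∈ A, f w = false} ∪ {f : V → Bool | ∀ w ∈ Aᶜ, f w = false}) ∪
      ({f : V → Bool | ∀ w ∈ A, f w = true} ∪ {f : V → Bool | ∀ w ∈ Aᶜ, f w = true}) := by
    ext f
    simp only [Set.mem_setOf_eq, Set.mem_union, N4]
    constructor
    · rintro (h | h | h | h)
      · refine Or.inl (Or.inl fun w hw => ?_)
        have hm : w ∉ toSet f := fun hm => (Set.eq_empty_iff_forall_notMem.mp h w) ⟨hm, hw⟩
        simpa [mem_toSet] using hm
      · refine Or.inl (Or.inr fun w hw => ?_)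
        have hm : w ∉ toSet f := fun hm => hw (h hm)
        simpa [mem_toSet] using hm
      · exact Or.inr (Or.inl fun w hw => mem_toSet.mp (h hw))
      · refine Or.inr (Or.inr fun w hw => ?_)
        have hm : w ∈ toSet f ∪ A := h ▸ Set.mem_univ w
        rcases hm with h' | h'
        · exact mem_toSet.mp h'
        · exact absurd h' hw
    · rintro ((h | h) | (h | h))
      · refine Or.inl (Set.eq_empty_iff_forall_notMem.mpr fun w hw => ?_)
        have hm : f w = true := mem_toSet.mp hw.1
        rw [h w hw.2] at hm
        exact Bool.false_ne_true hm
      · refine Or.inr (Or.inl fun w hw => ?_)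
        by_contra hwA
        have hm : f w = true := mem_toSet.mp hw
        rw [h w (Set.mem_compl hwA)] at hm
        exact Bool.false_ne_true hm
      · exact Or.inr (Or.inr (Or.inl fun w hw => mem_toSet.mpr (h w hw)))
      · refine Or.inr (Or.inr (Or.inr (Set.eq_univ_iff_forall.mpr fun w => ?_)))
        by_cases hwA : w ∈ A
        · exact Or.inr hwA
        · exact Or.inl (mem_toSet.mpr (h w (Set.mem_compl hwA)))
  rw [hrw]
  exact (((isClosed_all A false).union (isClosed_all Aᶜ false)).union
    ((isClosed_all A true).union (isClosed_all Aᶜ true)))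

lemma isClosed_opt (b : Set V → ℝ≥0∞)
    (h2 : ∀ X Y : Set V, b (X ∩ Y) + b (X ∪ Y) ≤ b X + b Y)
    (h3m : ∀ X : ℕ → Set V, Monotone X →
      b (⋃ n, X n) ≤ Filter.liminf (fun n => b (X n)) Filter.atTop)
    (h3a : ∀ X : ℕ → Set V, Antitone X →
      b (⋂ n, X n) ≤ Filter.liminf (fun n => b (X n)) Filter.atTop)
    {u v : V} (hlt : lamB b u v ≠ ⊤) :
    IsClosed {f : V → Bool | u ∈ toSet f ∧ v ∉ toSet f ∧ b (toSet f) ≤ lamB b u v} := by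
  apply IsSeqClosed.isClosed
  intro g f hg hconv
  have hpt : ∀ w : V, ∃ N : ℕ, ∀ k ≥ N, g k w = f w := by
    intro w
    have h := (tendsto_pi_nhds.mp hconv) w
    have hev : ∀ᶠ k in Filter.atTop, g k w ∈ ({f w} : Set Bool) :=
      h (IsOpen.mem_nhds (isOpen_discrete _) rfl)
    exact Filter.eventually_atTop.mp (hev.mono fun k hk => by simpa using hk)
  have hEq : toSet f = ⋃ m, ⋂ n, toSet (g (m + n)) := by
    ext w
    obtain ⟨N, hN⟩ := hpt w
    simp only [Set.mem_iUnion, Set.mem_iInter]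
    constructor
    · intro hw
      exact ⟨N, fun n => by
        have := hN (N + n) (by omega)
        simp only [toSet, Set.mem_setOf_eq] at hw ⊢
        rw [this, hw]⟩
    · rintro ⟨m, hm⟩
      have h1 := hm N
      have h2 := hN (m + N) (by omega)
      simp only [toSet, Set.mem_setOf_eq] at h1 ⊢
      rw [← h2, h1]
  rw [Set.mem_setOf_eq, hEq]
  exact key_liminf b h2 h3m h3a hlt (fun n => toSet (g n))
    (fun n => (hg n).1) (fun n => (hg n).2.1)
    (fun n => le_trans (hg n).2.2 le_self_add)

end Topology

end LamExtAux

open LamExtAux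

/-- Any laminar system of optimal cuts can be extended by a cut separating a given pair
optimally. -/
theorem laminar_extension {V : Type*} [Countable V] [Nonempty V]
    (b : Set V → ℝ≥0∞)
    (h0 : ∀ X : Set V, b X = 0 ↔ X = ∅ ∨ X = Set.univ)
    (h1 : ∀ X : Set V, b Xᶜ = b X)
    (h2 : ∀ X Y : Set V, b (X ∩ Y) + b (X ∪ Y) ≤ b X + b Y)
    (h3m : ∀ X : ℕ → Set V, Monotone X →
      b (⋃ n, X n) ≤ Filter.liminf (fun n => b (X n)) Filter.atTop)
    (h3a : ∀ X : ℕ → Set V, Antitone X →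
      b (⋂ n, X n) ≤ Filter.liminf (fun n => b (X n)) Filter.atTop)
    (h4 : ∀ u v : V, u ≠ v → lamB b u v < ⊤)
    (L : Set (Set V)) (hlam : Laminar L)
    (hopt : ∀ Z ∈ L, ∃ x y : V, x ≠ y ∧ IsOptCut b x y Z)
    (u v : V) (huv : u ≠ v) :
    ∃ Xstar : Set V, Laminar (insert Xstar L) ∧ SepOptimally b u v Xstar := by
  classical
  have lamtop : lamB b u v ≠ ⊤ := (h4 u v huv).ne
  set Fc : Set (V → Bool) :=
    {f | u ∈ toSet f ∧ v ∉ toSet f ∧ b (toSet f) ≤ lamB b u v} with hFcdef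
  have hFc : IsClosed Fc := isClosed_opt b h2 h3m h3a lamtop
  set T : ↥L → Set (V → Bool) := fun A => {f | N4 (toSet f) (A : Set V)} with hTdef
  have hTc : ∀ A : ↥L, IsClosed (T A) := fun A => isClosed_n4 _
  have hfin : ∀ s : Finset ↥L, (Fc ∩ ⋂ A ∈ s, T A).Nonempty := by
    intro s
    obtain ⟨Y, hY, hYn⟩ := finite_nested b h1 h2 h3m h3a h4 L hlam hopt huv
      (s.image Subtype.val) (by
        intro B hB
        simp only [Finset.coe_image, Set.mem_image, Finset.mem_coe] at hB
        obtain ⟨a, _, rfl⟩ := hB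
        exact a.2)
    set f0 : V → Bool := fun w => if w ∈ Y then true else false with hf0
    have hT0 : toSet f0 = Y := by
      ext w
      simp only [toSet, Set.mem_setOf_eq, hf0]
      by_cases h : w ∈ Y <;> simp [h]
    refine ⟨f0, Set.mem_inter ?_ ?_⟩
    · rw [hFcdef, Set.mem_setOf_eq, hT0]
      exact hY
    · refine Set.mem_iInter₂.mpr fun A hA => ?_
      rw [hTdef]
      simp only [Set.mem_setOf_eq, hT0]
      exact hYn (A : Set V) (Finset.mem_image.mpr ⟨A, hA, rfl⟩)
  have hne : (Fc ∩ ⋂ A, T A).Nonempty := by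
    by_contra hcon
    rw [Set.not_nonempty_iff_eq_empty] at hcon
    obtain ⟨s, hs⟩ := (hFc.isCompact).elim_finite_subfamily_closed T hTc hcon
    exact (hfin s).ne_empty hs
  obtain ⟨f, hfF, hfT⟩ := hne
  set Y := toSet f with hYdef
  have hN : ∀ A ∈ L, N4 Y A := fun A hA => Set.mem_iInter.mp hfT ⟨A, hA⟩
  obtain ⟨hYu, hYv, hYb⟩ := hfF
  have hYopt : IsOptCut b u v Y := ⟨hYu, hYv, le_antisymm hYb (lamB_le_cut b hYu hYv)⟩
  by_cases hgood : ∀ A ∈ L, Y ∩ A = ∅ ∨ Y ⊆ A ∨ A ⊆ Y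
  · refine ⟨Y, ?_, Or.inl hYopt⟩
    intro P hP Q hQ
    rcases Set.mem_insert_iff.mp hP with rfl | hP'
    · rcases Set.mem_insert_iff.mp hQ with rfl | hQ'
      · exact Or.inr (Or.inl le_rfl)
      · exact hgood Q hQ'
    · rcases Set.mem_insert_iff.mp hQ with rfl | hQ'
      · rcases hgood P hP' with h | h | h
        · exact Or.inl (by rwa [Set.inter_comm])
        · exact Or.inr (Or.inr h)
        · exact Or.inr (Or.inl h)
      · exact hlam P hP' Q hQ'
  · push_neg at hgood
    obtain ⟨A₀, hA₀L, hbad1, hbad2, hbad3⟩ := hgood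
    have hYA₀ : Yᶜ ⊆ A₀ := by
      rcases hN A₀ hA₀L with h | h | h | h
      · exact absurd h (Set.nonempty_iff_ne_empty.mp hbad1)
      · exact absurd h hbad2
      · exact absurd h hbad3
      · intro w hw
        have : w ∈ Y ∪ A₀ := h ▸ Set.mem_univ w
        rcases this with h' | h'
        · exact absurd h' hw
        · exact h'
    have hkey : ∀ B ∈ L, Yᶜ ∩ B = ∅ ∨ Yᶜ ⊆ B ∨ B ⊆ Yᶜ := by
      intro B hB
      rcases hN B hB with h | h | h | h
      · refine Or.inr (Or.inr fun w hw hwY => ?_)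
        exact absurd (Set.mem_inter hwY hw) (by simp [h])
      · -- Y ⊆ B
        by_contra hcon
        push_neg at hcon
        obtain ⟨hc1, hc2, hc3⟩ := hcon
        rcases hlam A₀ hA₀L B hB with hh | hh | hh
        · -- A₀ ∩ B = ∅ forces B ⊆ Y
          have hBY : B ⊆ Y := by
            intro w hw
            by_contra hwY
            exact absurd (Set.mem_inter (hYA₀ hwY) hw) (by simp [hh])
          obtain ⟨w, hw1, hw2⟩ := hc1
          exact hw1 (hBY hw2)
        · exact hc2 (Set.Subset.trans hYA₀ hh)
        · exact hbad2 (Set.Subset.trans h hh)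
      · refine Or.inl ?_
        ext w
        simp only [Set.mem_inter_iff, Set.mem_compl_iff, Set.mem_empty_iff_false, iff_false]
        rintro ⟨hw1, hw2⟩
        exact hw1 (h hw2)
      · refine Or.inr (Or.inl fun w hw => ?_)
        have : w ∈ Y ∪ B := h ▸ Set.mem_univ w
        rcases this with h' | h'
        · exact absurd h' hw
        · exact h'
    refine ⟨Yᶜ, ?_, Or.inr ?_⟩
    · intro P hP Q hQ
      rcases Set.mem_insert_iff.mp hP with rfl | hP'
      · rcases Set.mem_insert_iff.mp hQ with rfl | hQ'
        · exact Or.inr (Or.inl le_rfl)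
        · exact hkey Q hQ'
      · rcases Set.mem_insert_iff.mp hQ with rfl | hQ'
        · rcases hkey P hP' with h | h | h
          · exact Or.inl (by rwa [Set.inter_comm])
          · exact Or.inr (Or.inr h)
          · exact Or.inr (Or.inl h)
        · exact hlam P hP' Q hQ'
    · rw [compl_compl]
      exact hYopt
end
end

section
/- Consider the weighted graph on vertex set V = {v_n : n ∈ ℕ} ∪ {v_∞} with edges v_∞v_n of weight 1 for all n ∈ ℕ and edges e_n = v_nv_{n+1} with c(e_0) = 2 and c(e_n) = c(e_{n-1}) + n + 1 for n > 0. This weighted graph is finitely separable (λ_c(u,v) < ∞ for all u ≠ v) but has no Gomory-Hu tree: there is no tree T on V such that for every u ≠ v ∈ V some edge e of T has the property that the vertex set X of one of the two components of T − e separates u and v and satisfies d_c(X) = λ_c(u,v). -/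
/-!
For every `n`, the cut `{v₀, …, vₙ}` of value `n + 1 + c(eₙ)` is, up to complement, the unique
minimum `v_∞`–`vₙ` cut: a vertex set containing `vₙ` but not `v_∞` pays for each spoke into it
and for a path edge leaving it after `vₙ`; going beyond `vₙ` costs some `c(eₘ) ≥ c(eₙ₊₁)`, and
a gap at `vₘ` below `vₙ` saves at most the `m + 1` spokes of `v₀, …, vₘ` but costs
`c(eₘ) ≥ m + 2`. So a Gomory–Hu tree would need, for each `n`, a tree edge with fundamental cut
`{v₀, …, vₙ}`. But `v_∞` has a tree neighbour `vₖ`, and the only tree edge crossing a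
fundamental cut is the edge defining it, so `vₖv_∞` would define both `{v₀, …, vₖ}` and
`{v₀, …, vₖ₊₁}`.
-/

open Set Filter Topology ENNReal

noncomputable section

/-- `λ_c(u,v)`: the infimum of the values of `u-v` cuts. -/
def lamC {V : Type*} (G : SimpleGraph V) (c : Sym2 V → ℝ≥0∞) (u v : V) : ℝ≥0∞ :=
  ⨅ (X : Set V) (_ : u ∈ X ∧ v ∉ X), dCut G c X

/-- The fundamental cut of the tree-edge `xy`: the vertex set of the component of `T - xy`
containing `x`. -/
def fundCut {V : Type*} (T : SimpleGraph V) (x y : V) : Set V :=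
  {w | (T.deleteEdges {s(x, y)}).Reachable x w}

/-- The counterexample graph on `V = {vₙ : n ∈ ℕ} ∪ {v_∞}` (`some n` is `vₙ`, `none` is
`v_∞`): `v_∞` is joined to every `vₙ`, and `vₙ` is joined to `vₙ₊₁`. -/
def exGraph : SimpleGraph (Option ℕ) :=
  SimpleGraph.fromRel (fun x y =>
    (∃ n : ℕ, x = none ∧ y = some n) ∨ (∃ n : ℕ, x = some n ∧ y = some (n + 1)))

namespace SimpleGraph

variable {V : Type*}

section Cuts

variable {G : SimpleGraph V} {c : Sym2 V → ℝ≥0∞} {X : Set V} {u v : V}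

lemma mem_outEdges (h : G.Adj u v) (huv : Xor (u ∈ X) (v ∈ X)) : s(u, v) ∈ outEdges G X := by
  refine ⟨G.mem_edgeSet.mpr h, ?_⟩
  rcases huv with ⟨hu, hv⟩ | ⟨hv, hu⟩
  · exact ⟨u, v, rfl, hu, hv⟩
  · exact ⟨v, u, Sym2.eq_swap, hv, hu⟩

lemma outEdges_compl (G : SimpleGraph V) (X : Set V) : outEdges G Xᶜ = outEdges G X := by
  suffices ∀ Y : Set V, outEdges G Yᶜ ⊆ outEdges G Y from
    (this X).antisymm (by simpa using this Xᶜ)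
  rintro Y e ⟨he, x, y, rfl, hx, hy⟩
  exact ⟨he, y, x, Sym2.eq_swap, not_not.mp hy, hx⟩

lemma dCut_compl (G : SimpleGraph V) (c : Sym2 V → ℝ≥0∞) (X : Set V) :
    dCut G c Xᶜ = dCut G c X := by
  rw [dCut, dCut, outEdges_compl]

lemma sum_le_dCut {F : Finset (Sym2 V)} (hF : ↑F ⊆ outEdges G X) :
    ∑ e ∈ F, c e ≤ dCut G c X := by
  rw [dCut, ← Finset.tsum_subtype']
  exact ENNReal.tsum_mono_subtype c hF

lemma dCut_le_sum {F : Finset (Sym2 V)} (hF : outEdges G X ⊆ ↑F) :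
    dCut G c X ≤ ∑ e ∈ F, c e := by
  rw [dCut, ← Finset.tsum_subtype']
  exact ENNReal.tsum_mono_subtype c hF

lemma lamC_le_dCut (huv : Xor (u ∈ X) (v ∈ X)) : lamC G c u v ≤ dCut G c X := by
  rcases huv with huv | ⟨hv, hu⟩
  · exact iInf₂_le X huv
  · rw [← dCut_compl]
    exact iInf₂_le Xᶜ ⟨hu, not_not.mpr hv⟩

end Cuts

section Trees

variable {T : SimpleGraph V} {x y u v : V}

lemma notMem_fundCut (hT : T.IsAcyclic) (h : T.Adj x y) : y ∉ fundCut T x y :=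
  isAcyclic_iff_forall_adj_isBridge.mp hT h

lemma fundCut_swap (hT : T.IsTree) (h : T.Adj x y) : fundCut T y x = (fundCut T x y)ᶜ := by
  classical
  have hswap : s(y, x) = s(x, y) := Sym2.eq_swap
  ext w
  simp only [fundCut, Set.mem_compl_iff, hswap]
  constructor
  · exact fun hy hx => notMem_fundCut hT.isAcyclic h (hx.trans hy.symm)
  · intro hx
    -- a path from `w` to `x` must use `xy`; its part up to `y` avoids `x`, hence `xy`
    obtain ⟨P, hP⟩ := hT.connected.exists_isPath w x
    have hyP := P.snd_mem_support_of_mem_edges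
      (P.mem_edges_of_not_reachable_deleteEdges fun h' => hx h'.symm)
    have hxP := Walk.endpoint_notMem_support_takeUntil hP hyP h.ne
    refine Reachable.symm ⟨(P.takeUntil y hyP).toDeleteEdges {s(x, y)} ?_⟩
    simp only [Set.mem_singleton_iff]
    exact fun e he hex => hxP ((P.takeUntil y hyP).fst_mem_support_of_mem_edges (hex ▸ he))

lemma fundCut_eq_of_adj (hT : T.IsAcyclic) (hxy : T.Adj x y) (huv : T.Adj u v)
    (hu : u ∈ fundCut T x y) (hv : v ∉ fundCut T x y) : fundCut T u v = fundCut T x y := by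
  have he : s(u, v) = s(x, y) := by
    by_contra hne
    exact hv (hu.trans (deleteEdges_adj.mpr ⟨huv, hne⟩).reachable)
  rcases Sym2.eq_iff.mp he with ⟨rfl, rfl⟩ | ⟨rfl, rfl⟩
  · rfl
  · exact absurd hu (notMem_fundCut hT hxy)

def IsGomoryHuTree (G : SimpleGraph V) (c : Sym2 V → ℝ≥0∞) (T : SimpleGraph V) : Prop :=
  T.IsTree ∧ ∀ u v, u ≠ v → ∃ x y, T.Adj x y ∧ Xor (u ∈ fundCut T x y) (v ∈ fundCut T x y) ∧
    dCut G c (fundCut T x y) = lamC G c u v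

end Trees

end SimpleGraph

open SimpleGraph Finset

namespace ExGraph

/-- `pathWeight n = c(eₙ)`. -/
def pathWeight : ℕ → ℕ
  | 0 => 2
  | n + 1 => pathWeight n + (n + 1) + 1

lemma pathWeight_monotone : Monotone pathWeight :=
  monotone_nat_of_le_succ fun n => by simp only [pathWeight]; omega

lemma add_two_le_pathWeight (n : ℕ) : n + 2 ≤ pathWeight n := by
  induction n with
  | zero => simp [pathWeight]
  | succ n ih => simp only [pathWeight]; omega

lemma eq_pathWeight {w : ℕ → ℝ≥0∞} (hw0 : w 0 = 2)
    (hw : ∀ n : ℕ, w (n + 1) = w n + (n + 1) + 1) (n : ℕ) : w n = pathWeight n := by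
  induction n with
  | zero => simp [hw0, pathWeight]
  | succ n ih => rw [hw, ih, pathWeight]; push_cast; rfl

def spokeEdge (k : ℕ) : Sym2 (Option ℕ) := s(none, some k)

def pathEdge (k : ℕ) : Sym2 (Option ℕ) := s(some k, some (k + 1))

lemma adj_spoke (k : ℕ) : exGraph.Adj none (some k) := by
  simp [exGraph]

lemma adj_path (k : ℕ) : exGraph.Adj (some k) (some (k + 1)) := by
  simp [exGraph]

structure IsWeighting (c : Sym2 (Option ℕ) → ℝ≥0∞) : Prop where
  spoke : ∀ k, c (spokeEdge k) = 1
  path : ∀ k, c (pathEdge k) = pathWeight k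

def initSeg (n : ℕ) : Set (Option ℕ) := some '' Set.Iic n

@[simp] lemma some_mem_initSeg {k n : ℕ} : some k ∈ initSeg n ↔ k ≤ n := by
  simp [initSeg]

@[simp] lemma none_notMem_initSeg (n : ℕ) : none ∉ initSeg n := by
  simp [initSeg]

variable {c : Sym2 (Option ℕ) → ℝ≥0∞} {X : Set (Option ℕ)} {n : ℕ}

lemma IsWeighting.sum_spokes_union_paths (hc : IsWeighting c) (S P : Finset ℕ) :
    ∑ e ∈ S.image spokeEdge ∪ P.image pathEdge, c e =
      ((#S + ∑ k ∈ P, pathWeight k : ℕ) : ℝ≥0∞) := by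
  have hdisj : Disjoint (S.image spokeEdge) (P.image pathEdge) := by
    simp [Finset.disjoint_left, spokeEdge, pathEdge]
  rw [sum_union hdisj, sum_image (by simp [Set.InjOn, spokeEdge]),
    sum_image (by simp [Set.InjOn, pathEdge]; omega)]
  simp [hc.spoke, hc.path]

lemma IsWeighting.le_dCut (hc : IsWeighting c) (S P : Finset ℕ)
    (hS : ∀ k ∈ S, Xor (none ∈ X) (some k ∈ X))
    (hP : ∀ k ∈ P, Xor (some k ∈ X) (some (k + 1) ∈ X)) :
    ((#S + ∑ k ∈ P, pathWeight k : ℕ) : ℝ≥0∞) ≤ dCut exGraph c X := by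
  rw [← hc.sum_spokes_union_paths]
  refine sum_le_dCut ?_
  simp only [coe_union, coe_image, Set.union_subset_iff, Set.image_subset_iff]
  exact ⟨fun k hk => mem_outEdges (adj_spoke k) (hS k hk),
    fun k hk => mem_outEdges (adj_path k) (hP k hk)⟩

lemma outEdges_initSeg_subset (n : ℕ) :
    outEdges exGraph (initSeg n) ⊆
      ↑((range (n + 1)).image spokeEdge ∪ ({n} : Finset ℕ).image pathEdge) := by
  rintro e ⟨he, x, y, rfl, hx, hy⟩
  simp only [exGraph, mem_edgeSet, fromRel_adj] at he
  obtain ⟨k, hk, rfl⟩ := hx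
  rcases he with ⟨-, (⟨m, h, -⟩ | ⟨m, h, rfl⟩) | (⟨m, rfl, h⟩ | ⟨m, rfl, h⟩)⟩ <;>
    simp_all [spokeEdge, pathEdge] <;> omega

lemma IsWeighting.dCut_initSeg (hc : IsWeighting c) (n : ℕ) :
    dCut exGraph c (initSeg n) = ((n + 1 + pathWeight n : ℕ) : ℝ≥0∞) := by
  refine le_antisymm ?_ ?_
  · refine (dCut_le_sum (outEdges_initSeg_subset n)).trans_eq ?_
    rw [hc.sum_spokes_union_paths]
    simp
  · simpa using hc.le_dCut (X := initSeg n) (range (n + 1)) {n}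
      (fun k hk => Or.inr ⟨by simpa [Nat.lt_succ_iff] using hk, by simp⟩) (by simp)

lemma IsWeighting.natCast_lt_dCut_of_infinite (hc : IsWeighting c) (hnone : none ∉ X)
    (hX : (some ⁻¹' X).Infinite) (N : ℕ) : (N : ℝ≥0∞) < dCut exGraph c X := by
  obtain ⟨S, hSX, hS⟩ := hX.exists_subset_card_eq (N + 1)
  refine lt_of_lt_of_le ?_ (hc.le_dCut S ∅ (fun k hk => Or.inr ⟨hSX hk, hnone⟩) (by simp))
  exact_mod_cast (by simp [hS] : N < #S + ∑ k ∈ ∅, pathWeight k)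

lemma IsWeighting.dCut_initSeg_lt_of_far (hc : IsWeighting c) {b : ℕ} (hnone : none ∉ X)
    (hn : some n ∈ X) (hb : some b ∈ X) (hb1 : some (b + 1) ∉ X) (hnb : n < b) :
    dCut exGraph c (initSeg n) < dCut exGraph c X := by
  rw [hc.dCut_initSeg]
  refine lt_of_lt_of_le ?_
    (hc.le_dCut {n} {b} (fun k hk => Finset.mem_singleton.mp hk ▸ Or.inr ⟨hn, hnone⟩)
      (fun k hk => Finset.mem_singleton.mp hk ▸ Or.inl ⟨hb, hb1⟩))
  have := pathWeight_monotone (Nat.succ_le_of_lt hnb)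
  simp only [pathWeight] at this
  rw [Finset.card_singleton, sum_singleton, Nat.cast_lt]
  omega

lemma IsWeighting.dCut_initSeg_lt_of_gap (hc : IsWeighting c) {a : ℕ} (hnone : none ∉ X)
    (ha : some a ∉ X) (han : a < n) (hgap : ∀ k, a < k → k ≤ n → some k ∈ X)
    (hn1 : some (n + 1) ∉ X) : dCut exGraph c (initSeg n) < dCut exGraph c X := by
  rw [hc.dCut_initSeg]
  refine lt_of_lt_of_le ?_ (hc.le_dCut (Ioc a n) {a, n}
    (fun k hk => Or.inr ⟨hgap k (mem_Ioc.mp hk).1 (mem_Ioc.mp hk).2, hnone⟩) ?_)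
  · have := add_two_le_pathWeight a
    rw [Nat.card_Ioc, sum_pair han.ne, Nat.cast_lt]
    omega
  · rintro k hk
    rcases mem_insert.mp hk with rfl | hk
    · exact Or.inr ⟨hgap (k + 1) (Nat.lt_succ_self k) han, ha⟩
    · rw [Finset.mem_singleton.mp hk]
      exact Or.inl ⟨hgap n han le_rfl, hn1⟩

lemma exists_max_mem_of_finite (hX : (some ⁻¹' X).Finite) (hn : some n ∈ X) :
    ∃ b, n ≤ b ∧ some b ∈ X ∧ some (b + 1) ∉ X ∧ ∀ k, some k ∈ X → k ≤ b :=
  ⟨sSup (some ⁻¹' X), le_csSup hX.bddAbove hn, Nat.sSup_mem ⟨n, hn⟩ hX.bddAbove,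
    fun h => (le_csSup hX.bddAbove h).not_gt (Nat.lt_succ_self _),
    fun _ hk => le_csSup hX.bddAbove hk⟩

lemma IsWeighting.dCut_initSeg_lt (hc : IsWeighting c) (hnone : none ∉ X) (hn : some n ∈ X)
    (hne : X ≠ initSeg n) : dCut exGraph c (initSeg n) < dCut exGraph c X := by
  classical
  by_cases hfin : (some ⁻¹' X).Finite
  swap
  · rw [hc.dCut_initSeg]
    exact hc.natCast_lt_dCut_of_infinite hnone hfin _
  obtain ⟨b, hnb, hb, hb1, hbmax⟩ := exists_max_mem_of_finite hfin hn
  rcases hnb.lt_or_eq with hnb | rfl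
  · exact hc.dCut_initSeg_lt_of_far hnone hn hb hb1 hnb
  obtain ⟨m, hmn, hm⟩ : ∃ m ≤ n, some m ∉ X := by
    by_contra! h
    refine hne (Set.ext fun x => ?_)
    cases x with
    | none => simp [hnone]
    | some k =>
      exact ⟨fun hk => some_mem_initSeg.mpr (hbmax k hk), fun hk => h k (by simpa using hk)⟩
  have ha := Nat.findGreatest_spec (P := fun i => some i ∉ X) hmn hm
  refine hc.dCut_initSeg_lt_of_gap hnone ha ?_
    (fun k hak hkn => not_not.mp (Nat.findGreatest_is_greatest hak hkn)) hb1
  exact (Nat.findGreatest_le n).lt_of_ne fun h => ha (by rwa [h])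

lemma IsWeighting.lamC_none_some (hc : IsWeighting c) (n : ℕ) :
    lamC exGraph c none (some n) = dCut exGraph c (initSeg n) := by
  refine le_antisymm (lamC_le_dCut (Or.inr ⟨by simp, by simp⟩)) (le_iInf₂ fun X hX => ?_)
  rw [← dCut_compl exGraph c X]
  rcases eq_or_ne Xᶜ (initSeg n) with h | h
  · rw [h]
  · exact (hc.dCut_initSeg_lt (by simpa using hX.1) hX.2 h).le

lemma IsWeighting.eq_initSeg_of_dCut_eq_lamC (hc : IsWeighting c) {C : Set (Option ℕ)}
    (hsep : Xor (none ∈ C) (some n ∈ C)) (hC : dCut exGraph c C = lamC exGraph c none (some n)) :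
    C = initSeg n ∨ Cᶜ = initSeg n := by
  rw [hc.lamC_none_some] at hC
  by_contra! h
  rcases hsep with ⟨hnone, hn⟩ | ⟨hn, hnone⟩
  · have := hc.dCut_initSeg_lt (X := Cᶜ) (by simpa using hnone) hn h.2
    rw [dCut_compl, hC] at this
    exact lt_irrefl _ this
  · have := hc.dCut_initSeg_lt hnone hn h.1
    rw [hC] at this
    exact lt_irrefl _ this

lemma exists_initSeg_separating {u v : Option ℕ} (h : u ≠ v) :
    ∃ n, Xor (u ∈ initSeg n) (v ∈ initSeg n) := by
  match u, v with
  | none, none => exact absurd rfl h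
  | none, some n => exact ⟨n, Or.inr ⟨by simp, by simp⟩⟩
  | some m, none => exact ⟨m, Or.inl ⟨by simp, by simp⟩⟩
  | some m, some n =>
    have : m ≠ n := by simpa using h
    exact ⟨min m n, by simp only [Xor, some_mem_initSeg]; omega⟩

lemma IsWeighting.lamC_lt_top (hc : IsWeighting c) {u v : Option ℕ} (h : u ≠ v) :
    lamC exGraph c u v < ⊤ := by
  obtain ⟨n, hn⟩ := exists_initSeg_separating h
  exact (lamC_le_dCut hn).trans_lt (hc.dCut_initSeg n ▸ ENNReal.natCast_lt_top _)

lemma IsWeighting.not_isGomoryHuTree (hc : IsWeighting c) (T : SimpleGraph (Option ℕ)) :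
    ¬ IsGomoryHuTree exGraph c T := by
  rintro ⟨hT, hGH⟩
  have hcut (n : ℕ) : ∃ x y, T.Adj x y ∧ fundCut T x y = initSeg n := by
    obtain ⟨x, y, hxy, hsep, hval⟩ := hGH none (some n) (by simp)
    rcases hc.eq_initSeg_of_dCut_eq_lamC hsep hval with h | h
    · exact ⟨x, y, hxy, h⟩
    · exact ⟨y, x, hxy.symm, by rw [fundCut_swap hT hxy, h]⟩
  obtain ⟨_ | k, hk⟩ := hT.connected.preconnected.exists_adj_of_nontrivial (none : Option ℕ)
  · exact hk.ne rfl
  -- the tree edge `vₖv_∞` leaves every `initSeg m` with `k ≤ m`, so it is the edge cutting each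
  have hcross (m : ℕ) (hkm : k ≤ m) : fundCut T (some k) none = initSeg m := by
    obtain ⟨x, y, hxy, h⟩ := hcut m
    rw [← h]
    exact fundCut_eq_of_adj hT.isAcyclic hxy hk.symm (by simpa [h]) (by simp [h])
  have hsucc := (hcross k le_rfl).symm.trans (hcross (k + 1) k.le_succ)
  simpa using congrArg (some (k + 1) ∈ ·) hsucc

end ExGraph

open ExGraph

/-- The counterexample graph (with `c(v_∞vₙ) = 1`, `c(e₀) = 2`,
`c(eₙ₊₁) = c(eₙ) + (n+1) + 1` where `eₙ = vₙvₙ₊₁`) is finitely separable but admits no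
Gomory–Hu tree. -/
theorem exGraph_no_gomory_hu_tree (c : Sym2 (Option ℕ) → ℝ≥0∞) (w : ℕ → ℝ≥0∞)
    (hw0 : w 0 = 2) (hw : ∀ n : ℕ, w (n + 1) = w n + (n + 1) + 1)
    (hc1 : ∀ n : ℕ, c s(none, some n) = 1)
    (hc2 : ∀ n : ℕ, c s(some n, some (n + 1)) = w n) :
    (∀ u v : Option ℕ, u ≠ v → lamC exGraph c u v < ⊤) ∧
    ¬ ∃ T : SimpleGraph (Option ℕ), T.IsTree ∧
        ∀ u v : Option ℕ, u ≠ v → ∃ x y : Option ℕ, T.Adj x y ∧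
          ((u ∈ fundCut T x y ∧ v ∉ fundCut T x y) ∨
            (v ∈ fundCut T x y ∧ u ∉ fundCut T x y)) ∧
          dCut exGraph c (fundCut T x y) = lamC exGraph c u v := by
  have hc : IsWeighting c := ⟨hc1, fun k => (hc2 k).trans (eq_pathWeight hw0 hw k)⟩
  exact ⟨fun u v => hc.lamC_lt_top, fun ⟨T, hT⟩ => hc.not_isGomoryHuTree T hT⟩
end
end
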